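/- arXiv:1208.3672 — 10 statements merged into one kernel-verified Lean document; each statement's English description precedes it below -/
import Mathlib

section
/- Let F(X) = Q + ∑_{i=1}^m A_i* X⁻¹ A_i, where Q is positive definite and A_1,...,A_m are n×n complex matrices. Then F maps the order interval [Q, Q + ∑_{i=1}^m A_i* Q⁻¹ A_i] into itself; that is, if Q ≤ X ≤ Q + ∑_{i=1}^m A_i* Q⁻¹ A_i (in the Loewner order), then Q ≤ F(X) ≤ Q + ∑_{i=1}^m A_i* Q⁻¹ A_i. -/
open scoped ComplexOrder
open Matrix Finset

/-!
`F(X) - Q = ∑ Aᵢᴴ X⁻¹ Aᵢ` is positive semidefinite because `X⁻¹` is, and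
`(Q + ∑ Aᵢᴴ Q⁻¹ Aᵢ) - F(X) = ∑ Aᵢᴴ (Q⁻¹ - X⁻¹) Aᵢ` is positive semidefinite because matrix
inversion is operator antitone on positive definite matrices and `Q ≤ X`.
-/

namespace Matrix

variable {ι m n R : Type*}

theorem posSemidef_sum_conjTranspose_mul_mul [Ring R] [PartialOrder R] [StarRing R]
    [AddLeftMono R] [Fintype n] [Finite m] {P : Matrix n n R} (hP : P.PosSemidef)
    (s : Finset ι) (A : ι → Matrix n m R) : (∑ i ∈ s, (A i)ᴴ * P * A i).PosSemidef :=
  posSemidef_sum s fun i _ => hP.conjTranspose_mul_mul_same (A i)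

theorem sum_conjTranspose_mul_mul_sub [Ring R] [StarRing R] [Fintype n]
    (P P' : Matrix n n R) (s : Finset ι) (A : ι → Matrix n m R) :
    ∑ i ∈ s, (A i)ᴴ * P * A i - ∑ i ∈ s, (A i)ᴴ * P' * A i
      = ∑ i ∈ s, (A i)ᴴ * (P - P') * A i := by
  simp only [← sum_sub_distrib, Matrix.mul_sub, Matrix.sub_mul]

open scoped MatrixOrder Norms.L2Operator in
theorem PosDef.posSemidef_inv_sub_inv [Fintype n] [DecidableEq n] {Q X : Matrix n n ℂ}
    (hQ : Q.PosDef) (hQX : (X - Q).PosSemidef) : (Q⁻¹ - X⁻¹).PosSemidef := by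
  rw [nonsing_inv_eq_ringInverse, nonsing_inv_eq_ringInverse]
  exact CStarAlgebra.ringInverse_le_ringInverse hQX (isStrictlyPositive_iff_posDef.mpr hQ)

end Matrix

theorem stmt1_general {n m : ℕ} (Q : Matrix (Fin n) (Fin n) ℂ) (hQ : Q.PosDef)
    (A : Fin m → Matrix (Fin n) (Fin n) ℂ)
    (X : Matrix (Fin n) (Fin n) ℂ)
    (hlow : (X - Q).PosSemidef) :
    ((Q + ∑ i, (A i)ᴴ * X⁻¹ * A i) - Q).PosSemidef ∧
      ((Q + ∑ i, (A i)ᴴ * Q⁻¹ * A i) - (Q + ∑ i, (A i)ᴴ * X⁻¹ * A i)).PosSemidef := by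
  have hX : X.PosDef := by simpa using hQ.add_posSemidef hlow
  constructor
  · rw [add_sub_cancel_left]
    exact posSemidef_sum_conjTranspose_mul_mul hX.inv.posSemidef _ A
  · rw [add_sub_add_left_eq_sub, sum_conjTranspose_mul_mul_sub]
    exact posSemidef_sum_conjTranspose_mul_mul (hQ.posSemidef_inv_sub_inv hlow) _ A

theorem stmt1 {n m : ℕ} (Q : Matrix (Fin n) (Fin n) ℂ) (hQ : Q.PosDef)
    (A : Fin m → Matrix (Fin n) (Fin n) ℂ)
    (X : Matrix (Fin n) (Fin n) ℂ) (hX : X.IsHermitian)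
    (hlow : (X - Q).PosSemidef)
    (hup : (Q + ∑ i, (A i)ᴴ * Q⁻¹ * A i - X).PosSemidef) :
    ((Q + ∑ i, (A i)ᴴ * X⁻¹ * A i) - Q).PosSemidef ∧
      ((Q + ∑ i, (A i)ᴴ * Q⁻¹ * A i) - (Q + ∑ i, (A i)ᴴ * X⁻¹ * A i)).PosSemidef :=
  stmt1_general Q hQ A X hlow
end

section
/- If X is a Hermitian positive definite solution of the matrix equation X - ∑_{i=1}^m A_i* X⁻¹ A_i = Q, where Q is positive definite, then Q ≤ X ≤ Q + ∑_{i=1}^m A_i* Q⁻¹ A_i in the Loewner order. -/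
/-!
Rewriting the equation as `X - Q = ∑ Aᵢᴴ X⁻¹ Aᵢ` gives `Q ≤ X` at once, since congruences of the
positive matrix `X⁻¹` are positive. Inversion is order-reversing on positive definite matrices, so
`X⁻¹ ≤ Q⁻¹`, and then `Q + ∑ Aᵢᴴ Q⁻¹ Aᵢ - X = ∑ Aᵢᴴ (Q⁻¹ - X⁻¹) Aᵢ` is positive as well.
-/

open scoped ComplexOrder
open Matrix Finset

namespace Matrix

theorem PosSemidef.sum_conjTranspose_mul_mul_same {ι m n R : Type*} [Ring R] [PartialOrder R]
    [StarRing R] [AddLeftMono R] [Fintype n] [Finite m] {M : Matrix n n R} (hM : M.PosSemidef)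
    (s : Finset ι) (A : ι → Matrix n m R) : (∑ i ∈ s, (A i)ᴴ * M * A i).PosSemidef :=
  posSemidef_sum s fun i _ => hM.conjTranspose_mul_mul_same (A i)

theorem PosDef.posSemidef_inv_sub_inv_s2 {n K : Type*} [Fintype n] [DecidableEq n] [Field K]
    [PartialOrder K] [StarRing K] [StarOrderedRing K] {A B : Matrix n n K} (hA : A.PosDef)
    (hB : B.PosDef) (h : (B - A).PosSemidef) : (A⁻¹ - B⁻¹).PosSemidef := by
  have := hA.isUnit.invertible
  have := hB.isUnit.invertible
  have := hA.inv.isUnit.invertible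
  -- Both differences are Schur complements of the block matrix `[[B, 1], [1, A⁻¹]]`.
  have hSchurB := PosDef.fromBlocks₁₁ (1 : Matrix n n K) A⁻¹ hB
  have hSchurA := PosDef.fromBlocks₂₂ B (1 : Matrix n n K) hA.inv
  simp only [conjTranspose_one, one_mul, mul_one, inv_inv_of_invertible] at hSchurB hSchurA
  exact hSchurB.mp (hSchurA.mpr h)

end Matrix

theorem stmt2 {n m : ℕ} (Q : Matrix (Fin n) (Fin n) ℂ) (hQ : Q.PosDef)
    (A : Fin m → Matrix (Fin n) (Fin n) ℂ)
    (X : Matrix (Fin n) (Fin n) ℂ) (hX : X.PosDef)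
    (heq : X - ∑ i, (A i)ᴴ * X⁻¹ * A i = Q) :
    (X - Q).PosSemidef ∧ ((Q + ∑ i, (A i)ᴴ * Q⁻¹ * A i) - X).PosSemidef := by
  have hXQ : X - Q = ∑ i, (A i)ᴴ * X⁻¹ * A i := by
    rw [← heq, sub_sub_cancel]
  have hQX : (X - Q).PosSemidef := hXQ ▸ hX.inv.posSemidef.sum_conjTranspose_mul_mul_same _ A
  have hInv : (Q⁻¹ - X⁻¹).PosSemidef := hQ.posSemidef_inv_sub_inv_s2 hX hQX
  have hUpper : (Q + ∑ i, (A i)ᴴ * Q⁻¹ * A i) - X = ∑ i, (A i)ᴴ * (Q⁻¹ - X⁻¹) * A i := by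
    simp only [mul_sub, sub_mul, sum_sub_distrib, ← hXQ]
    abel
  exact ⟨hQX, hUpper ▸ hInv.sum_conjTranspose_mul_mul_same _ A⟩
end

section
/- There exists at most one Hermitian positive definite solution X of the matrix equation X - ∑_{i=1}^m A_i* X⁻¹ A_i = Q, where Q is positive definite and A_1,...,A_m are arbitrary n×n complex matrices. -/
/-!
If `α • y ≤ x` with `α > 0`, then `x⁻¹ ≤ α⁻¹ • y⁻¹`, and since `z ↦ ∑ i, star (a i) * z * a i`
is monotone the two equations give `α • (x - q) ≤ y - q`, i.e. `y ≥ α • x + (1 - α) • q`.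
Choosing `c ∈ (0, 1]` with `c • x ≤ q` and `c • y ≤ q`, this improves `(1 - d) • y ≤ x` to
`(1 - d (1 - c)) • x ≤ y`. Alternating the roles of `x` and `y` from `d = 1` gives
`(1 - (1 - c) ^ k) • y ≤ x` and `(1 - (1 - c) ^ k) • x ≤ y` for every `k`, and letting `k → ∞`
(the positive cone is closed) yields `x = y`. The argument works in any unital C⋆-algebra;
matrices are one through the Loewner order and the `L²` operator norm.
-/

open scoped ComplexOrder Ring Topology
open Matrix Finset Filter

lemma Ring.inverse_smul {𝕜 B : Type*} [Field 𝕜] [Ring B] [Algebra 𝕜 B] {y : B} (hy : IsUnit y)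
    {r : 𝕜} (hr : r ≠ 0) : (r • y)⁻¹ʳ = r⁻¹ • y⁻¹ʳ := by
  have hry : IsUnit (r • y) := by
    refine isUnit_iff_exists.2 ⟨r⁻¹ • y⁻¹ʳ, ?_, ?_⟩ <;>
      simp [hr, Ring.mul_inverse_cancel _ hy, Ring.inverse_mul_cancel _ hy]
  rw [eq_comm, ← one_mul (r • y)⁻¹ʳ, Ring.eq_mul_inverse_iff_mul_eq _ _ _ hry,
    smul_mul_smul_comm, inv_mul_cancel₀ hr, Ring.inverse_mul_cancel _ hy, one_smul]

namespace CStarAlgebra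

variable {A : Type*} [CStarAlgebra A] [PartialOrder A] [StarOrderedRing A]

lemma eventually_smul_le {q x : A} (hq : IsStrictlyPositive q) (hx : 0 ≤ x) :
    ∀ᶠ c in 𝓝[>] (0 : ℝ), c • x ≤ q := by
  rcases subsingleton_or_nontrivial A with hA | hA
  · exact .of_forall fun c ↦ (Subsingleton.elim _ _).le
  obtain ⟨r, hr, hrq⟩ := (CFC.exists_pos_algebraMap_le_iff hq.isSelfAdjoint).2
    fun _ hs ↦ hq.spectrum_pos hs
  have hx_le : x ≤ ‖x‖ • (1 : A) := by
    simpa [Algebra.algebraMap_eq_smul_one] using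
      (IsSelfAdjoint.of_nonneg hx).le_algebraMap_norm_self
  filter_upwards [Ioo_mem_nhdsGT (div_pos hr (by positivity : 0 < ‖x‖ + 1))] with c ⟨hc₀, hc⟩
  have hcr : c * ‖x‖ ≤ r := by
    rw [lt_div_iff₀ (by positivity)] at hc
    nlinarith
  calc c • x ≤ c • ‖x‖ • (1 : A) := smul_le_smul_of_nonneg_left hx_le hc₀.le
    _ = (c * ‖x‖) • (1 : A) := smul_smul _ _ _
    _ ≤ r • (1 : A) := smul_le_smul_of_nonneg_right hcr zero_le_one
    _ ≤ q := by rwa [← Algebra.algebraMap_eq_smul_one]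

variable {κ : Type*} [Fintype κ] (a : κ → A)

lemma sum_star_mul_ringInverse_mul_nonneg {x : A} (hx : IsStrictlyPositive x) :
    0 ≤ ∑ i, star (a i) * x⁻¹ʳ * a i :=
  sum_nonneg fun _ _ ↦ star_left_conjugate_nonneg hx.ringInverse.nonneg _

lemma sum_star_mul_ringInverse_mul_le {x y : A} (hx : IsStrictlyPositive x) (hxy : x ≤ y) :
    ∑ i, star (a i) * y⁻¹ʳ * a i ≤ ∑ i, star (a i) * x⁻¹ʳ * a i :=
  sum_le_sum fun _ _ ↦ star_left_conjugate_le_conjugate (ringInverse_le_ringInverse hxy hx) _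

variable {q x y : A}

lemma smul_sub_le_sub_of_smul_le (hy : IsStrictlyPositive y)
    (hxq : x - ∑ i, star (a i) * x⁻¹ʳ * a i = q) (hyq : y - ∑ i, star (a i) * y⁻¹ʳ * a i = q)
    {α : ℝ} (hα : 0 ≤ α) (h : α • y ≤ x) : α • (x - q) ≤ y - q := by
  have hx' : x - q = ∑ i, star (a i) * x⁻¹ʳ * a i := by rw [← hxq, sub_sub_cancel]
  have hy' : y - q = ∑ i, star (a i) * y⁻¹ʳ * a i := by rw [← hyq, sub_sub_cancel]
  rw [hx', hy']
  rcases hα.eq_or_lt with rfl | hα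
  · rw [zero_smul]
    exact sum_star_mul_ringInverse_mul_nonneg a hy
  calc α • ∑ i, star (a i) * x⁻¹ʳ * a i ≤ α • ∑ i, star (a i) * (α • y)⁻¹ʳ * a i :=
        smul_le_smul_of_nonneg_left (sum_star_mul_ringInverse_mul_le a (hy.smul hα) h) hα.le
    _ = ∑ i, star (a i) * y⁻¹ʳ * a i := by
      simp only [Ring.inverse_smul hy.isUnit hα.ne', mul_smul_comm, smul_mul_assoc, ← smul_sum,
        smul_inv_smul₀ hα.ne']

lemma one_sub_mul_smul_le_of_one_sub_smul_le (hy : IsStrictlyPositive y)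
    (hxq : x - ∑ i, star (a i) * x⁻¹ʳ * a i = q) (hyq : y - ∑ i, star (a i) * y⁻¹ʳ * a i = q)
    {c d : ℝ} (hc : c • x ≤ q) (hd₀ : 0 ≤ d) (hd₁ : d ≤ 1) (h : (1 - d) • y ≤ x) :
    (1 - d * (1 - c)) • x ≤ y :=
  calc (1 - d * (1 - c)) • x = (1 - d) • (x - q) + q + d • (c • x - q) := by module
    _ ≤ (y - q) + q + 0 :=
      add_le_add (add_le_add_left (smul_sub_le_sub_of_smul_le a hy hxq hyq (by linarith) h) q)
        (smul_nonpos_of_nonneg_of_nonpos hd₀ (sub_nonpos.2 hc))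
    _ = y := by abel

lemma one_sub_pow_smul_le (hx : IsStrictlyPositive x) (hy : IsStrictlyPositive y)
    (hxq : x - ∑ i, star (a i) * x⁻¹ʳ * a i = q) (hyq : y - ∑ i, star (a i) * y⁻¹ʳ * a i = q)
    {c : ℝ} (hc₀ : 0 ≤ c) (hc₁ : c ≤ 1) (hcx : c • x ≤ q) (hcy : c • y ≤ q) (k : ℕ) :
    (1 - (1 - c) ^ k) • y ≤ x ∧ (1 - (1 - c) ^ k) • x ≤ y := by
  induction k with
  | zero => simpa using ⟨hx.nonneg, hy.nonneg⟩
  | succ k ih =>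
    have hd₀ : 0 ≤ (1 - c) ^ k := _root_.pow_nonneg (sub_nonneg.2 hc₁) k
    have hd₁ : (1 - c) ^ k ≤ 1 := pow_le_one₀ (sub_nonneg.2 hc₁) (sub_le_self 1 hc₀)
    rw [pow_succ]
    exact ⟨one_sub_mul_smul_le_of_one_sub_smul_le a hx hyq hxq hcy hd₀ hd₁ ih.2,
      one_sub_mul_smul_le_of_one_sub_smul_le a hy hxq hyq hcx hd₀ hd₁ ih.1⟩

theorem eq_of_sub_sum_star_mul_ringInverse_mul_eq (hq : IsStrictlyPositive q)
    (hx : IsStrictlyPositive x) (hy : IsStrictlyPositive y)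
    (hxq : x - ∑ i, star (a i) * x⁻¹ʳ * a i = q) (hyq : y - ∑ i, star (a i) * y⁻¹ʳ * a i = q) :
    x = y := by
  obtain ⟨c, hcx, hcy, hc₀, hc₁⟩ := ((eventually_smul_le hq hx.nonneg).and
    ((eventually_smul_le hq hy.nonneg).and (Ioc_mem_nhdsGT one_pos))).exists
  have hlim : Tendsto (fun k : ℕ ↦ 1 - (1 - c) ^ k) atTop (𝓝 1) := by
    simpa using
      (tendsto_pow_atTop_nhds_zero_of_lt_one (sub_nonneg.2 hc₁) (sub_lt_self 1 hc₀)).const_sub 1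
  have hlim_smul (z : A) : Tendsto (fun k : ℕ ↦ (1 - (1 - c) ^ k) • z) atTop (𝓝 z) := by
    simpa using hlim.smul_const z
  have hk := one_sub_pow_smul_le a hx hy hxq hyq hc₀.le hc₁ hcx hcy
  exact le_antisymm (le_of_tendsto' (hlim_smul x) fun k ↦ (hk k).2)
    (le_of_tendsto' (hlim_smul y) fun k ↦ (hk k).1)

end CStarAlgebra

theorem stmt3 {n m : ℕ} (Q : Matrix (Fin n) (Fin n) ℂ) (hQ : Q.PosDef)
    (A : Fin m → Matrix (Fin n) (Fin n) ℂ)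
    (X Y : Matrix (Fin n) (Fin n) ℂ) (hX : X.PosDef) (hY : Y.PosDef)
    (heqX : X - ∑ i, (A i)ᴴ * X⁻¹ * A i = Q)
    (heqY : Y - ∑ i, (A i)ᴴ * Y⁻¹ * A i = Q) :
    X = Y := by
  open scoped MatrixOrder Matrix.Norms.L2Operator in
  simp only [nonsing_inv_eq_ringInverse] at heqX heqY
  exact CStarAlgebra.eq_of_sub_sum_star_mul_ringInverse_mul_eq A hQ.isStrictlyPositive
    hX.isStrictlyPositive hY.isStrictlyPositive heqX heqY
end

section
/- There exists a Hermitian positive definite solution X of the matrix equation X - ∑_{i=1}^m A_i* X⁻¹ A_i = Q, for any positive definite Q and arbitrary n×n complex matrices A_1,...,A_m. -/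
/-!
Work in a finite-dimensional C⋆-algebra, such as the `n × n` complex matrices with the Loewner
order, and write `G x = q + ∑ i, aᵢ⋆ x⁻¹ aᵢ`. Since inversion is operator antitone, `G` is
antitone on strictly positive elements and maps the order interval `[q, G q]` into itself; hence
`G ∘ G` is monotone there and its iterates starting at `q` increase. Order intervals are compact,
so these iterates converge to a fixed point `x` of `G ∘ G`, i.e. `y = G x` and `x = G y`.
Such a two-cycle is trivial: if `y ≤ t x` with `t ≥ 1`, inverting and applying `G` gives
`y ≤ t x - (t - 1) q`, and `q ≥ s⁻¹ x` improves the constant to `1 + (1 - s⁻¹)(t - 1)`.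
Iterating, `y ≤ x`, and by symmetry `x ≤ y`.
-/

open Filter Topology Set Function

section MonotoneConvergence

variable {X : Type*} [TopologicalSpace X] [PartialOrder X] [OrderClosedTopology X]

theorem Monotone.isLUB_range_of_mapClusterPt {u : ℕ → X} (hu : Monotone u) {x : X}
    (hx : MapClusterPt x atTop u) : IsLUB (range u) x := by
  refine ⟨?_, fun b hb => isClosed_Iic.mem_of_mapClusterPt hx (.of_forall fun k => hb ⟨k, rfl⟩)⟩
  rintro _ ⟨k, rfl⟩
  exact isClosed_Ici.mem_of_mapClusterPt hx (eventually_atTop.2 ⟨k, fun _ => (hu ·)⟩)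

theorem Monotone.exists_tendsto_of_isCompact {u : ℕ → X} (hu : Monotone u) {s : Set X}
    (hs : IsCompact s) (hus : ∀ k, u k ∈ s) : ∃ x ∈ s, Tendsto u atTop (𝓝 x) := by
  obtain ⟨x, hxs, hx⟩ :=
    hs.exists_mapClusterPt (f := atTop) (tendsto_principal.2 (.of_forall hus))
  refine ⟨x, hxs, hs.tendsto_nhds_of_unique_mapClusterPt (.of_forall hus) fun y _ hy => ?_⟩
  exact (hu.isLUB_range_of_mapClusterPt hy).unique (hu.isLUB_range_of_mapClusterPt hx)

end MonotoneConvergence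

theorem MonotoneOn.monotone_iterate_of_le_map {α : Type*} [Preorder α] {f : α → α} {s : Set α}
    (hf : MonotoneOn f s) (hs : MapsTo f s s) {x : α} (hx : x ∈ s) (hxf : x ≤ f x) :
    Monotone fun n => f^[n] x := by
  refine monotone_nat_of_le_succ fun n => ?_
  induction n with
  | zero => exact hxf
  | succ n ih =>
    rw [iterate_succ_apply', iterate_succ_apply' f (n + 1)]
    exact hf (hs.iterate n hx) (hs.iterate (n + 1) hx) ih

open Ring in
theorem Ring.inverse_smul_s4 {𝕜 R : Type*} [Field 𝕜] [Ring R] [Algebra 𝕜 R] {t : 𝕜} (ht : t ≠ 0)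
    (x : R) : (t • x)⁻¹ʳ = t⁻¹ • x⁻¹ʳ := by
  by_cases hx : IsUnit x
  · exact Ring.inverse_unit ⟨t • x, t⁻¹ • x⁻¹ʳ,
      by simp [smul_smul, ht, Ring.mul_inverse_cancel x hx],
      by simp [smul_smul, ht, Ring.inverse_mul_cancel x hx]⟩
  · have htx : ¬IsUnit (t • x) := fun h => hx <| by
      simpa [smul_smul, ht] using h.smul (Units.mk0 t⁻¹ (inv_ne_zero ht))
    rw [Ring.inverse_non_unit _ hx, Ring.inverse_non_unit _ htx, smul_zero]

namespace CStarAlgebra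

variable {A : Type*} [CStarAlgebra A] {ι : Type*} [Fintype ι]

open Ring in
noncomputable def invCongrSum (a : ι → A) (x : A) : A := ∑ i, star (a i) * x⁻¹ʳ * a i

theorem invCongrSum_smul (a : ι → A) {t : ℝ} (ht : t ≠ 0) (x : A) :
    invCongrSum a (t • x) = t⁻¹ • invCongrSum a x := by
  simp only [invCongrSum, Ring.inverse_smul_s4 ht, Finset.smul_sum, smul_mul_assoc, mul_smul_comm]

theorem continuousAt_invCongrSum (a : ι → A) {x : A} (hx : IsUnit x) :
    ContinuousAt (invCongrSum a) x := by
  have := NormedRing.inverse_continuousAt hx.unit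
  unfold invCongrSum
  fun_prop

variable (q : A) (a : ι → A)

noncomputable def invCongrMap (x : A) : A := q + invCongrSum a x

variable {q a}

theorem continuousAt_invCongrMap {x : A} (hx : IsUnit x) : ContinuousAt (invCongrMap q a) x :=
  continuousAt_const.add (continuousAt_invCongrSum a hx)

variable [PartialOrder A] [StarOrderedRing A]

instance [ProperSpace A] : CompactIccSpace A where
  isCompact_Icc {a b} := by
    refine Metric.isCompact_of_isClosed_isBounded isClosed_Icc
      (Metric.isBounded_closedBall (x := a) (r := ‖b - a‖) |>.subset fun x hx => ?_)
    rw [Metric.mem_closedBall, dist_eq_norm]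
    exact norm_le_norm_of_nonneg_of_le (sub_nonneg.2 hx.1) (sub_le_sub_right hx.2 a)

theorem exists_le_smul_of_isStrictlyPositive {a b : A} (ha : IsStrictlyPositive a)
    (hb : IsSelfAdjoint b) : ∃ t : ℝ, 1 ≤ t ∧ b ≤ t • a := by
  rcases subsingleton_or_nontrivial A with hA | hA
  · exact ⟨1, le_rfl, (Subsingleton.elim _ _).le⟩
  obtain ⟨r, hr, hra⟩ := (CFC.exists_pos_algebraMap_le_iff ha.isSelfAdjoint).2
    fun x hx => ha.spectrum_pos hx
  refine ⟨max 1 (‖b‖ / r), le_max_left _ _, ?_⟩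
  calc b ≤ algebraMap ℝ A ‖b‖ := hb.le_algebraMap_norm_self
    _ = (‖b‖ / r) • algebraMap ℝ A r := by
      rw [Algebra.smul_def, ← map_mul, div_mul_cancel₀ _ hr.ne']
    _ ≤ (‖b‖ / r) • a := smul_le_smul_of_nonneg_left hra (by positivity)
    _ ≤ max 1 (‖b‖ / r) • a := smul_le_smul_of_nonneg_right (le_max_right _ _) ha.nonneg

theorem invCongrSum_nonneg (a : ι → A) {x : A} (hx : IsStrictlyPositive x) :
    0 ≤ invCongrSum a x :=
  Finset.sum_nonneg fun i _ => star_left_conjugate_nonneg hx.ringInverse.nonneg (a i)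

theorem invCongrSum_le_invCongrSum (a : ι → A) {x y : A} (hx : IsStrictlyPositive x)
    (hxy : x ≤ y) : invCongrSum a y ≤ invCongrSum a x :=
  Finset.sum_le_sum fun i _ =>
    star_left_conjugate_le_conjugate (ringInverse_le_ringInverse hxy hx) (a i)

theorem le_invCongrMap {x : A} (hx : IsStrictlyPositive x) : q ≤ invCongrMap q a x :=
  le_add_of_nonneg_right (invCongrSum_nonneg a hx)

theorem invCongrMap_le_invCongrMap {x y : A} (hx : IsStrictlyPositive x) (hxy : x ≤ y) :
    invCongrMap q a y ≤ invCongrMap q a x :=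
  add_le_add_right (invCongrSum_le_invCongrSum a hx hxy) q

theorem mapsTo_invCongrMap_Icc (hq : IsStrictlyPositive q) :
    MapsTo (invCongrMap q a) (Icc q (invCongrMap q a q)) (Icc q (invCongrMap q a q)) :=
  fun _ hx => ⟨le_invCongrMap (hq.of_le hx.1), invCongrMap_le_invCongrMap hq hx.1⟩

theorem invCongrMap_le_smul_of_isFixedPt_comp (hq : IsStrictlyPositive q) {x : A}
    (hx : IsStrictlyPositive x) (hfix : IsFixedPt (invCongrMap q a ∘ invCongrMap q a) x)
    {δ t : ℝ} (hδ : δ • x ≤ q) (ht : 1 ≤ t) (hxt : invCongrMap q a x ≤ t • x) :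
    invCongrMap q a x ≤ (1 + (1 - δ) * (t - 1)) • x := by
  set y := invCongrMap q a x
  have hy : IsStrictlyPositive y := hq.of_le (le_invCongrMap hx)
  have hxq : invCongrSum a y = x - q := eq_sub_of_add_eq' hfix
  have hyq : invCongrSum a x = y - q := (add_sub_cancel_left q _).symm
  have hinv : t⁻¹ • (y - q) ≤ x - q := by
    simpa [invCongrSum_smul a (by positivity : t ≠ 0), hxq, hyq] using
      invCongrSum_le_invCongrSum a hy hxt
  have hyq_le : y - q ≤ t • (x - q) := by
    simpa [smul_smul, mul_inv_cancel₀ (by positivity : t ≠ 0)] using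
      smul_le_smul_of_nonneg_left hinv (by positivity : (0 : ℝ) ≤ t)
  calc y ≤ t • x - (t - 1) • q := (sub_le_iff_le_add.1 hyq_le).trans_eq (by module)
    _ ≤ t • x - (t - 1) • (δ • x) :=
        sub_le_sub_left (smul_le_smul_of_nonneg_left hδ (by linarith)) _
    _ = (1 + (1 - δ) * (t - 1)) • x := by module

theorem invCongrMap_le_of_isFixedPt_comp (hq : IsStrictlyPositive q) {x : A}
    (hx : IsStrictlyPositive x) (hfix : IsFixedPt (invCongrMap q a ∘ invCongrMap q a) x) :
    invCongrMap q a x ≤ x := by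
  obtain ⟨s, hs, hxs⟩ := exists_le_smul_of_isStrictlyPositive hq hx.isSelfAdjoint
  obtain ⟨t₀, ht₀, hxt₀⟩ := exists_le_smul_of_isStrictlyPositive hx
    (hq.of_le (le_invCongrMap (a := a) hx)).isSelfAdjoint
  have hsx : s⁻¹ • x ≤ q := by
    simpa [smul_smul, inv_mul_cancel₀ (by positivity : s ≠ 0)] using
      smul_le_smul_of_nonneg_left hxs (inv_nonneg.2 (by positivity : (0 : ℝ) ≤ s))
  have hs' : 0 ≤ 1 - s⁻¹ := sub_nonneg.2 (inv_le_one_of_one_le₀ hs)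
  have hiter : ∀ k : ℕ, invCongrMap q a x ≤ (1 + (1 - s⁻¹) ^ k * (t₀ - 1)) • x := by
    intro k
    induction k with
    | zero => simpa using hxt₀
    | succ k ih =>
      have := invCongrMap_le_smul_of_isFixedPt_comp hq hx hfix hsx
        (le_add_of_nonneg_right (mul_nonneg (_root_.pow_nonneg hs' k) (sub_nonneg.2 ht₀))) ih
      convert this using 2
      ring
  have hlim : Tendsto (fun k : ℕ => (1 + (1 - s⁻¹) ^ k * (t₀ - 1)) • x) atTop (𝓝 x) := by
    have := (((tendsto_pow_atTop_nhds_zero_of_lt_one hs' (sub_lt_self 1 (by positivity))).mul_const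
      (t₀ - 1)).const_add 1).smul_const x
    simpa using this
  exact ge_of_tendsto' hlim hiter

theorem isFixedPt_invCongrMap_of_isFixedPt_comp (hq : IsStrictlyPositive q) {x : A}
    (hx : IsStrictlyPositive x) (hfix : IsFixedPt (invCongrMap q a ∘ invCongrMap q a) x) :
    IsFixedPt (invCongrMap q a) x := by
  have hy : IsStrictlyPositive (invCongrMap q a x) := hq.of_le (le_invCongrMap hx)
  have hfix' : IsFixedPt (invCongrMap q a ∘ invCongrMap q a) (invCongrMap q a x) :=
    congrArg (invCongrMap q a) hfix
  refine le_antisymm (invCongrMap_le_of_isFixedPt_comp hq hx hfix) ?_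
  simpa only [show invCongrMap q a (invCongrMap q a x) = x from hfix] using
    invCongrMap_le_of_isFixedPt_comp hq hy hfix'

theorem exists_isStrictlyPositive_isFixedPt_invCongrMap [ProperSpace A]
    (hq : IsStrictlyPositive q) (a : ι → A) :
    ∃ x, IsStrictlyPositive x ∧ IsFixedPt (invCongrMap q a) x := by
  set G := invCongrMap q a
  have hGS := mapsTo_invCongrMap_Icc (a := a) hq
  have hGGS := hGS.comp hGS
  have hGG : MonotoneOn (G ∘ G) (Icc q (G q)) := fun x hx y hy hxy =>
    invCongrMap_le_invCongrMap (hq.of_le (hGS hy).1)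
      (invCongrMap_le_invCongrMap (hq.of_le hx.1) hxy)
  have hqS : q ∈ Icc q (G q) := ⟨le_rfl, le_invCongrMap hq⟩
  obtain ⟨x, hxS, hx⟩ := (hGG.monotone_iterate_of_le_map hGGS hqS (hGGS hqS).1
    ).exists_tendsto_of_isCompact isCompact_Icc fun k => hGGS.iterate k hqS
  have hxpos : IsStrictlyPositive x := hq.of_le hxS.1
  have hcont : ContinuousAt (G ∘ G) x :=
    (continuousAt_invCongrMap (hq.of_le (hGS hxS).1).isUnit).comp
      (continuousAt_invCongrMap hxpos.isUnit)
  exact ⟨x, hxpos, isFixedPt_invCongrMap_of_isFixedPt_comp hq hxpos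
    (isFixedPt_of_tendsto_iterate hx hcont)⟩

end CStarAlgebra

open scoped ComplexOrder
open Matrix

theorem stmt4 {n m : ℕ} (Q : Matrix (Fin n) (Fin n) ℂ) (hQ : Q.PosDef)
    (A : Fin m → Matrix (Fin n) (Fin n) ℂ) :
    ∃ X : Matrix (Fin n) (Fin n) ℂ, X.PosDef ∧ X - ∑ i, (A i)ᴴ * X⁻¹ * A i = Q := by
  open scoped MatrixOrder Matrix.Norms.L2Operator in
  obtain ⟨X, hXpos, hX⟩ :=
    CStarAlgebra.exists_isStrictlyPositive_isFixedPt_invCongrMap hQ.isStrictlyPositive A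
  refine ⟨X, hXpos.posDef, sub_eq_iff_eq_add.2 ?_⟩
  simpa only [CStarAlgebra.invCongrMap, CStarAlgebra.invCongrSum, star_eq_conjTranspose,
    ← nonsing_inv_eq_ringInverse, add_comm Q] using hX.eq.symm
end

section
/- Let F(X) = Q + ∑_{i=1}^m A_i* X⁻¹ A_i with Q positive definite, and define the iteration X_0 = Q, X_{n+1} = F(X_n). Then for every positive integer k, Q ≤ F^{2k}(Q) ≤ F^{2k+2}(Q) ≤ F^{2k+1}(Q) ≤ F^{2k-1}(Q) ≤ Q + ∑_{i=1}^m A_i* Q⁻¹ A_i in the Loewner order; in particular the even-indexed iterates are nondecreasing, the odd-indexed iterates are nonincreasing, and every even iterate is ≤ every odd iterate. -/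
/-!
Inversion is antitone on positive definite matrices in the Loewner order, so `F` is antitone
there, and `Q ≤ F X` for every positive definite `X`. Hence `F ∘ F` is monotone, and it carries
the three inequalities `Q ≤ F² Q`, `F² Q ≤ F Q` and `F³ Q ≤ F Q` along all even steps; the outer
bounds are `Q ≤ F X` and `F X ≤ F Q` for `X = F^j Q ≥ Q`.
-/

open scoped ComplexOrder
open Matrix

section Iterate

open Set Function

variable {α : Type*} [Preorder α] {f : α → α} {s : Set α} {x₀ : α}

theorem MonotoneOn.iterate (hf : MonotoneOn f s) (hs : MapsTo f s s) :
    ∀ j, MonotoneOn f^[j] s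
  | 0 => monotoneOn_id
  | j + 1 => (hf.iterate hs j).comp hf hs

theorem le_iterate_of_forall_le_apply (hs : MapsTo f s s) (hx₀ : x₀ ∈ s)
    (hlow : ∀ x ∈ s, x₀ ≤ f x) : ∀ j, x₀ ≤ f^[j] x₀
  | 0 => le_rfl
  | j + 1 => by
    rw [iterate_succ_apply']
    exact hlow _ (hs.iterate j hx₀)

theorem AntitoneOn.iterate_succ_le_apply (hf : AntitoneOn f s) (hs : MapsTo f s s)
    (hx₀ : x₀ ∈ s) (hlow : ∀ x ∈ s, x₀ ≤ f x) (j : ℕ) : f^[j + 1] x₀ ≤ f x₀ := by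
  rw [iterate_succ_apply']
  exact hf hx₀ (hs.iterate j hx₀) (le_iterate_of_forall_le_apply hs hx₀ hlow j)

theorem AntitoneOn.iterate_two_mul_add_le (hf : AntitoneOn f s) (hs : MapsTo f s s)
    (hx₀ : x₀ ∈ s) {r r' : ℕ} (h : f^[r] x₀ ≤ f^[r'] x₀) (j : ℕ) :
    f^[2 * j + r] x₀ ≤ f^[2 * j + r'] x₀ := by
  simp only [iterate_add_apply, iterate_mul]
  exact (hf.comp hf hs).iterate (hs.comp hs) j (hs.iterate r hx₀) (hs.iterate r' hx₀) h

end Iterate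

open scoped MatrixOrder

open scoped Matrix.Norms.L2Operator in
theorem Matrix.PosDef.inv_anti {n : Type*} [Fintype n] [DecidableEq n] {X Y : Matrix n n ℂ}
    (hX : X.PosDef) (hXY : X ≤ Y) : Y⁻¹ ≤ X⁻¹ := by
  have hY : Y.PosDef := by simpa using hX.add_posSemidef (le_iff.mp hXY)
  simpa using CStarAlgebra.inv_le_inv (a := hX.isUnit.unit) (b := hY.isUnit.unit)
    hX.posSemidef.nonneg hXY

namespace Matrix

variable {n ι : Type*} [Fintype n] [DecidableEq n] [Fintype ι]

noncomputable def nonlinearEqMap (Q : Matrix n n ℂ) (A : ι → Matrix n n ℂ) (X : Matrix n n ℂ) :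
    Matrix n n ℂ :=
  Q + ∑ i, (A i)ᴴ * X⁻¹ * A i

variable {Q X : Matrix n n ℂ} {A : ι → Matrix n n ℂ}

theorem PosDef.sum_conjTranspose_mul_inv_mul_nonneg (hX : X.PosDef) :
    0 ≤ ∑ i, (A i)ᴴ * X⁻¹ * A i :=
  Finset.sum_nonneg fun i _ => (hX.inv.posSemidef.conjTranspose_mul_mul_same (A i)).nonneg

theorem le_nonlinearEqMap (hX : X.PosDef) : Q ≤ nonlinearEqMap Q A X :=
  le_add_of_nonneg_right hX.sum_conjTranspose_mul_inv_mul_nonneg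

theorem posDef_nonlinearEqMap (hQ : Q.PosDef) (hX : X.PosDef) :
    (nonlinearEqMap Q A X).PosDef :=
  hQ.add_posSemidef hX.sum_conjTranspose_mul_inv_mul_nonneg.posSemidef

theorem antitoneOn_nonlinearEqMap :
    AntitoneOn (nonlinearEqMap Q A) {X : Matrix n n ℂ | X.PosDef} := fun _ hX _ _ hXY =>
  add_le_add_right (Finset.sum_le_sum fun i _ =>
    star_left_conjugate_le_conjugate (PosDef.inv_anti hX hXY) (A i)) Q

end Matrix

theorem stmt5 {n m : ℕ} (Q : Matrix (Fin n) (Fin n) ℂ) (hQ : Q.PosDef)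
    (A : Fin m → Matrix (Fin n) (Fin n) ℂ)
    (F : Matrix (Fin n) (Fin n) ℂ → Matrix (Fin n) (Fin n) ℂ)
    (hF : ∀ X, F X = Q + ∑ i, (A i)ᴴ * X⁻¹ * A i)
    (k : ℕ) (hk : 1 ≤ k) :
    (F^[2 * k] Q - Q).PosSemidef ∧
      (F^[2 * k + 2] Q - F^[2 * k] Q).PosSemidef ∧
      (F^[2 * k + 1] Q - F^[2 * k + 2] Q).PosSemidef ∧
      (F^[2 * k - 1] Q - F^[2 * k + 1] Q).PosSemidef ∧
      ((Q + ∑ i, (A i)ᴴ * Q⁻¹ * A i) - F^[2 * k - 1] Q).PosSemidef := by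
  obtain rfl : F = nonlinearEqMap Q A := funext hF
  have hs : Set.MapsTo (nonlinearEqMap Q A) {X | X.PosDef} {X | X.PosDef} :=
    fun _ hX => posDef_nonlinearEqMap hQ hX
  have hlow : ∀ X ∈ {X : Matrix (Fin n) (Fin n) ℂ | X.PosDef}, Q ≤ nonlinearEqMap Q A X :=
    fun _ hX => le_nonlinearEqMap hX
  have hanti := antitoneOn_nonlinearEqMap (Q := Q) (A := A)
  have hQF : Q ≤ nonlinearEqMap Q A Q := hlow Q hQ
  obtain ⟨j, rfl⟩ : ∃ j, k = j + 1 := ⟨k - 1, by omega⟩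
  refine ⟨?_, ?_, ?_, ?_, ?_⟩ <;> rw [← le_iff]
  · exact le_iterate_of_forall_le_apply hs hQ hlow _
  · simpa [mul_add] using hanti.iterate_two_mul_add_le hs hQ (r := 0) (r' := 2)
      (hlow _ (hs hQ)) (j + 1)
  · simpa [mul_add] using hanti.iterate_two_mul_add_le hs hQ (r := 2) (r' := 1)
      (hanti hQ (hs hQ) hQF) (j + 1)
  · simpa [mul_add] using hanti.iterate_two_mul_add_le hs hQ (r := 3) (r' := 1)
      (hanti.iterate_succ_le_apply hs hQ hlow 2) j
  · exact hanti.iterate_succ_le_apply hs hQ hlow (2 * j)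
end

section
/- Let F(X) = Q + ∑_{i=1}^m A_i* X⁻¹ A_i with Q positive definite. If 0 < t < 1 and Q ≤ X ≤ Q + ∑_{i=1}^m A_i* Q⁻¹ A_i in the Loewner order, then F²(tX) ≥ t(1 + η(t)) F²(X), where η(t) = (1-t)λ_min(Q) / [ t ( λ_max(Q) + (∑_{i=1}^m λ_max(A_i* A_i))/λ_min(Q) ) ]. -/
/-!
Since `F(tX) = Q + t⁻¹ ∑ Aᵢᴴ X⁻¹ Aᵢ ≤ t⁻¹ F(X)`, antitonicity of the matrix inverse gives
`∑ Aᵢᴴ F(tX)⁻¹ Aᵢ ≥ t ∑ Aᵢᴴ F(X)⁻¹ Aᵢ`, that is `F²(tX) ≥ t F²(X) + (1 - t) Q`. The surplus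
`(1 - t) Q ≥ (1 - t) λ_min(Q) I` absorbs `t η F²(X)`, because `F(Y) ≤ c I` with
`c = λ_max(Q) + ∑ λ_max(Aᵢᴴ Aᵢ) / λ_min(Q)` whenever `Y ≥ Q`, in particular for `Y = F(X)`,
and `η` is chosen so that `t η c = (1 - t) λ_min(Q)`.
-/

open scoped ComplexOrder MatrixOrder Matrix.Norms.L2Operator
open Matrix Finset

namespace Matrix

variable {𝕜 n ι : Type*} [RCLike 𝕜] [Fintype n] [Fintype ι]

def conjSum (A : ι → Matrix n n 𝕜) (M : Matrix n n 𝕜) : Matrix n n 𝕜 :=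
  ∑ i, (A i)ᴴ * M * A i

lemma conjSum_mono (A : ι → Matrix n n 𝕜) {M N : Matrix n n 𝕜} (h : M ≤ N) :
    conjSum A M ≤ conjSum A N :=
  Finset.sum_le_sum fun i _ => star_left_conjugate_le_conjugate h (A i)

lemma conjSum_nonneg (A : ι → Matrix n n 𝕜) {M : Matrix n n 𝕜} (h : 0 ≤ M) :
    0 ≤ conjSum A M := by
  simpa [conjSum] using conjSum_mono A h

lemma conjSum_smul (A : ι → Matrix n n 𝕜) (r : ℝ) (M : Matrix n n 𝕜) :
    conjSum A (r • M) = r • conjSum A M := by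
  simp only [conjSum, Finset.smul_sum, Matrix.mul_smul, Matrix.smul_mul]

variable [DecidableEq n]

lemma conjSum_one (A : ι → Matrix n n 𝕜) : conjSum A 1 = ∑ i, (A i)ᴴ * A i := by
  simp [conjSum]

lemma inv_real_smul (r : ℝ) (M : Matrix n n 𝕜) : (r • M)⁻¹ = r⁻¹ • M⁻¹ := by
  rcases eq_or_ne r 0 with rfl | hr
  · simp
  rw [RCLike.real_smul_eq_coe_smul (K := 𝕜), RCLike.real_smul_eq_coe_smul (K := 𝕜)]
  by_cases hM : IsUnit M.det
  · have : Invertible (r : 𝕜) := invertibleOfNonzero (by exact_mod_cast hr)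
    rw [inv_smul _ _ hM, invOf_eq_inv, RCLike.ofReal_inv]
  · have hrM : ¬ IsUnit ((r : 𝕜) • M).det := by
      simpa [det_smul, isUnit_iff_ne_zero, hr] using hM
    rw [nonsing_inv_apply_not_isUnit _ hM, nonsing_inv_apply_not_isUnit _ hrM, smul_zero]

lemma IsHermitian.iInf_eigenvalues_smul_one_le {B : Matrix n n 𝕜} (hB : B.IsHermitian) :
    (⨅ j, hB.eigenvalues j) • (1 : Matrix n n 𝕜) ≤ B := by
  rw [← Algebra.algebraMap_eq_smul_one]
  refine algebraMap_le_of_le_spectrum (fun x hx => ?_) hB.isSelfAdjoint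
  rw [hB.spectrum_real_eq_range_eigenvalues] at hx
  obtain ⟨j, rfl⟩ := hx
  exact ciInf_le (Set.finite_range _).bddBelow j

lemma IsHermitian.le_iSup_eigenvalues_smul_one {B : Matrix n n 𝕜} (hB : B.IsHermitian) :
    B ≤ (⨆ j, hB.eigenvalues j) • (1 : Matrix n n 𝕜) := by
  rw [← Algebra.algebraMap_eq_smul_one]
  refine le_algebraMap_of_spectrum_le (fun x hx => ?_) hB.isSelfAdjoint
  rw [hB.spectrum_real_eq_range_eigenvalues] at hx
  obtain ⟨j, rfl⟩ := hx
  exact le_ciSup (Set.finite_range _).bddAbove j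

lemma PosDef.iInf_eigenvalues_pos [Nonempty n] {M : Matrix n n 𝕜} (hM : M.PosDef) :
    0 < ⨅ j, hM.isHermitian.eigenvalues j := by
  obtain ⟨j, hj⟩ := Finite.exists_min hM.isHermitian.eigenvalues
  exact (hM.eigenvalues_pos j).trans_le (le_ciInf hj)

lemma sum_conjTranspose_mul_self_le (A : ι → Matrix n n 𝕜) :
    ∑ i, (A i)ᴴ * A i ≤ (∑ i, ⨆ j, (posSemidef_conjTranspose_mul_self (A i)).1.eigenvalues j) •
      (1 : Matrix n n 𝕜) := by
  rw [Finset.sum_smul]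
  exact Finset.sum_le_sum fun i _ =>
    (posSemidef_conjTranspose_mul_self (A i)).1.le_iSup_eigenvalues_smul_one

lemma PosDef.inv_le_inv {M N : Matrix n n ℂ} (hM : M.PosDef) (h : M ≤ N) : N⁻¹ ≤ M⁻¹ := by
  rw [nonsing_inv_eq_ringInverse, nonsing_inv_eq_ringInverse]
  exact CStarAlgebra.ringInverse_le_ringInverse h hM.isStrictlyPositive

lemma PosDef.inv_le_inv_iInf_eigenvalues_smul_one [Nonempty n] {M : Matrix n n ℂ}
    (hM : M.PosDef) : M⁻¹ ≤ (⨅ j, hM.1.eigenvalues j)⁻¹ • (1 : Matrix n n ℂ) := by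
  simpa [inv_real_smul] using
    (PosDef.one.smul hM.iInf_eigenvalues_pos).inv_le_inv hM.1.iInf_eigenvalues_smul_one_le

noncomputable def fixedPointMap (Q : Matrix n n ℂ) (A : ι → Matrix n n ℂ) (Y : Matrix n n ℂ) :
    Matrix n n ℂ :=
  Q + conjSum A Y⁻¹

variable {Q : Matrix n n ℂ} {A : ι → Matrix n n ℂ} {X Y : Matrix n n ℂ}

lemma le_fixedPointMap (hY : 0 ≤ Y) : Q ≤ fixedPointMap Q A Y :=
  le_add_of_nonneg_right (conjSum_nonneg A hY.posSemidef.inv.nonneg)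

lemma posDef_fixedPointMap (hQ : Q.PosDef) (hY : 0 ≤ Y) : (fixedPointMap Q A Y).PosDef :=
  hQ.add_posSemidef (conjSum_nonneg A hY.posSemidef.inv.nonneg).posSemidef

lemma fixedPointMap_smul (t : ℝ) :
    fixedPointMap Q A (t • Y) = Q + t⁻¹ • conjSum A Y⁻¹ := by
  rw [fixedPointMap, inv_real_smul, conjSum_smul]

lemma fixedPointMap_smul_le (hQ : 0 ≤ Q) {t : ℝ} (ht0 : 0 < t) (ht1 : t ≤ 1) :
    fixedPointMap Q A (t • Y) ≤ t⁻¹ • fixedPointMap Q A Y := by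
  rw [fixedPointMap_smul, fixedPointMap, smul_add]
  gcongr
  exact le_smul_of_one_le_left hQ (one_le_inv₀ ht0 |>.mpr ht1)

lemma smul_conjSum_inv_fixedPointMap_le (hQ : Q.PosDef) (hY : 0 ≤ Y) {t : ℝ} (ht0 : 0 < t)
    (ht1 : t ≤ 1) :
    t • conjSum A (fixedPointMap Q A Y)⁻¹ ≤ conjSum A (fixedPointMap Q A (t • Y))⁻¹ := by
  have hinv : t • (fixedPointMap Q A Y)⁻¹ = (t⁻¹ • fixedPointMap Q A Y)⁻¹ := by
    rw [inv_real_smul, inv_inv]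
  rw [← conjSum_smul, hinv]
  exact conjSum_mono A <| (posDef_fixedPointMap hQ (smul_nonneg ht0.le hY)).inv_le_inv
    (fixedPointMap_smul_le hQ.posSemidef.nonneg ht0 ht1)

lemma fixedPointMap_le_smul_one [Nonempty n] (hQ : Q.PosDef) (hY : Q ≤ Y) :
    fixedPointMap Q A Y ≤ ((⨆ j, hQ.1.eigenvalues j) +
      (∑ i, ⨆ j, (posSemidef_conjTranspose_mul_self (A i)).1.eigenvalues j) /
        (⨅ j, hQ.1.eigenvalues j)) • (1 : Matrix n n ℂ) := by
  set lmin := ⨅ j, hQ.1.eigenvalues j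
  have hYinv : Y⁻¹ ≤ lmin⁻¹ • (1 : Matrix n n ℂ) :=
    (hQ.inv_le_inv hY).trans hQ.inv_le_inv_iInf_eigenvalues_smul_one
  calc fixedPointMap Q A Y
      ≤ Q + lmin⁻¹ • ∑ i, (A i)ᴴ * A i := by
        rw [fixedPointMap, ← conjSum_one, ← conjSum_smul]
        gcongr
        exact conjSum_mono A hYinv
    _ ≤ _ := by
        rw [add_smul, div_eq_inv_mul, mul_smul]
        exact add_le_add hQ.1.le_iSup_eigenvalues_smul_one
          (smul_le_smul_of_nonneg_left (sum_conjTranspose_mul_self_le A)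
            (inv_nonneg.2 hQ.iInf_eigenvalues_pos.le))

lemma smul_fixedPointMap_fixedPointMap_le (hQ : Q.PosDef) (hX : 0 ≤ X) {t η lo c : ℝ}
    (ht0 : 0 < t) (ht1 : t ≤ 1) (hη : 0 ≤ η) (hlo : lo • (1 : Matrix n n ℂ) ≤ Q)
    (hc : fixedPointMap Q A (fixedPointMap Q A X) ≤ c • (1 : Matrix n n ℂ))
    (hηc : t * η * c ≤ (1 - t) * lo) :
    (t * (1 + η)) • fixedPointMap Q A (fixedPointMap Q A X) ≤
      fixedPointMap Q A (fixedPointMap Q A (t • X)) := by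
  have hQη : (t * η) • fixedPointMap Q A (fixedPointMap Q A X) ≤ (1 - t) • Q :=
    calc (t * η) • fixedPointMap Q A (fixedPointMap Q A X)
        ≤ (t * η * c) • (1 : Matrix n n ℂ) := by
          rw [mul_smul (t * η) c]; exact smul_le_smul_of_nonneg_left hc (by positivity)
      _ ≤ ((1 - t) * lo) • (1 : Matrix n n ℂ) :=
          smul_le_smul_of_nonneg_right (b := (1 : Matrix n n ℂ)) hηc PosSemidef.one.nonneg
      _ ≤ (1 - t) • Q := by
          rw [mul_smul (1 - t) lo]; exact smul_le_smul_of_nonneg_left hlo (by linarith)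
  calc (t * (1 + η)) • fixedPointMap Q A (fixedPointMap Q A X)
      = t • Q + t • conjSum A (fixedPointMap Q A X)⁻¹ +
          (t * η) • fixedPointMap Q A (fixedPointMap Q A X) := by
        rw [mul_add, mul_one, add_smul, fixedPointMap, smul_add]
    _ ≤ t • Q + conjSum A (fixedPointMap Q A (t • X))⁻¹ + (1 - t) • Q := by
        gcongr
        exact smul_conjSum_inv_fixedPointMap_le hQ hX ht0 ht1
    _ = fixedPointMap Q A (fixedPointMap Q A (t • X)) := by
        simp only [fixedPointMap, sub_smul, one_smul]; abel

end Matrix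

theorem stmt6_general {n m : ℕ} (Q : Matrix (Fin n) (Fin n) ℂ) (hQ : Q.PosDef)
    (A : Fin m → Matrix (Fin n) (Fin n) ℂ)
    (F : Matrix (Fin n) (Fin n) ℂ → Matrix (Fin n) (Fin n) ℂ)
    (hF : ∀ Y, F Y = Q + ∑ i, (A i)ᴴ * Y⁻¹ * A i)
    (t : ℝ) (ht0 : 0 < t) (ht1 : t < 1)
    (X : Matrix (Fin n) (Fin n) ℂ)
    (hlow : (X - Q).PosSemidef)
    (η : ℝ)
    (hη : η = ((1 - t) * (⨅ j, hQ.1.eigenvalues j)) /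
        (t * ((⨆ j, hQ.1.eigenvalues j) +
          (∑ i, ⨆ j, (Matrix.posSemidef_conjTranspose_mul_self (A i)).1.eigenvalues j) /
            (⨅ j, hQ.1.eigenvalues j)))) :
    (F (F ((t : ℂ) • X)) - ((t * (1 + η) : ℝ) : ℂ) • F (F X)).PosSemidef := by
  obtain rfl : F = fixedPointMap Q A := funext hF
  rcases isEmpty_or_nonempty (Fin n) with hn | hn
  · rw [Subsingleton.elim (_ - _) 0]
    exact PosSemidef.zero
  have hQX : Q ≤ X := hlow
  have hX : 0 ≤ X := hQ.posSemidef.nonneg.trans hQX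
  set lmin := ⨅ j, hQ.1.eigenvalues j
  set lmax := ⨆ j, hQ.1.eigenvalues j
  set σ := ∑ i, ⨆ j, (posSemidef_conjTranspose_mul_self (A i)).1.eigenvalues j
  have hlmin : 0 < lmin := hQ.iInf_eigenvalues_pos
  have hlmin_le_lmax : lmin ≤ lmax :=
    ciInf_le_ciSup (Set.finite_range _).bddBelow (Set.finite_range _).bddAbove
  have hσ : 0 ≤ σ := Finset.sum_nonneg fun i _ =>
    Real.iSup_nonneg (posSemidef_conjTranspose_mul_self (A i)).eigenvalues_nonneg
  have hc : 0 < lmax + σ / lmin :=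
    add_pos_of_pos_of_nonneg (hlmin.trans_le hlmin_le_lmax) (div_nonneg hσ hlmin.le)
  have hηc : t * η * (lmax + σ / lmin) = (1 - t) * lmin := by
    rw [hη, mul_comm t, mul_assoc, div_mul_cancel₀ _ (mul_pos ht0 hc).ne']
  rw [Complex.coe_smul, Complex.coe_smul]
  exact smul_fixedPointMap_fixedPointMap_le hQ hX ht0 ht1.le
    (hη ▸ div_nonneg (mul_nonneg (by linarith) hlmin.le) (mul_pos ht0 hc).le)
    hQ.1.iInf_eigenvalues_smul_one_le (fixedPointMap_le_smul_one hQ (le_fixedPointMap hX)) hηc.le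

theorem stmt6 {n m : ℕ} (Q : Matrix (Fin n) (Fin n) ℂ) (hQ : Q.PosDef)
    (A : Fin m → Matrix (Fin n) (Fin n) ℂ)
    (F : Matrix (Fin n) (Fin n) ℂ → Matrix (Fin n) (Fin n) ℂ)
    (hF : ∀ Y, F Y = Q + ∑ i, (A i)ᴴ * Y⁻¹ * A i)
    (t : ℝ) (ht0 : 0 < t) (ht1 : t < 1)
    (X : Matrix (Fin n) (Fin n) ℂ) (hX : X.IsHermitian)
    (hlow : (X - Q).PosSemidef)
    (hup : ((Q + ∑ i, (A i)ᴴ * Q⁻¹ * A i) - X).PosSemidef)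
    (η : ℝ)
    (hη : η = ((1 - t) * (⨅ j, hQ.1.eigenvalues j)) /
        (t * ((⨆ j, hQ.1.eigenvalues j) +
          (∑ i, ⨆ j, (Matrix.posSemidef_conjTranspose_mul_self (A i)).1.eigenvalues j) /
            (⨅ j, hQ.1.eigenvalues j)))) :
    (F (F ((t : ℂ) • X)) - ((t * (1 + η) : ℝ) : ℂ) • F (F X)).PosSemidef :=
  stmt6_general Q hQ A F hF t ht0 ht1 X hlow η hη
end

section
/- Define sequences by β₀ = λ_min(Q), α_n = λ_max(Q) + (∑_{i=1}^m λ_max(A_i* A_i))/β_n, β_{n+1} = λ_min(Q) + (∑_{i=1}^m λ_min(A_i* A_i))/α_n. Then (α_n) is nonincreasing and bounded below by λ_max(Q), and (β_n) is nondecreasing and bounded above by λ_min(Q) + (∑_{i=1}^m λ_min(A_i* A_i))/λ_max(Q); hence both sequences converge. -/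
/-!
The map `x ↦ L + s / (M + S / x)` is monotone on `(0, ∞)` when `S, s ≥ 0`, so starting from
`β₀ = L` the sequence `βₖ` is nondecreasing, and `αₖ = M + S / βₖ` is then nonincreasing.
Since `αₖ ≥ M > 0`, the same monotonicity gives `βₖ₊₁ ≤ L + s / M`; monotone bounded
sequences converge.
-/

open scoped ComplexOrder
open Matrix Finset Filter

namespace AlternatingRecurrence

variable {L M S s : ℝ} {α β : ℕ → ℝ}
  (hβ0 : β 0 = L) (hα : ∀ k, α k = M + S / β k) (hβ : ∀ k, β (k + 1) = L + s / α k)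
include hβ0 hα hβ

theorem beta_pos (hL : 0 < L) (hM : 0 < M) (hS : 0 ≤ S) (hs : 0 ≤ s) (k : ℕ) : 0 < β k := by
  induction k with
  | zero => rwa [hβ0]
  | succ k ih =>
    have hαk : 0 < α k := by
      rw [hα k]; exact add_pos_of_pos_of_nonneg hM (div_nonneg hS ih.le)
    rw [hβ k]; exact add_pos_of_pos_of_nonneg hL (div_nonneg hs hαk.le)

omit hβ0 hβ in
theorem le_alpha (hS : 0 ≤ S) (hβpos : ∀ k, 0 < β k) (k : ℕ) : M ≤ α k := by
  rw [hα k]; exact le_add_of_nonneg_right (div_nonneg hS (hβpos k).le)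

theorem monotone_beta (hM : 0 < M) (hS : 0 ≤ S) (hs : 0 ≤ s) (hβpos : ∀ k, 0 < β k) :
    Monotone β := by
  have hαpos k : 0 < α k := hM.trans_le (le_alpha hα hS hβpos k)
  refine monotone_nat_of_le_succ fun k => ?_
  induction k with
  | zero => rw [hβ0, hβ 0]; exact le_add_of_nonneg_right (div_nonneg hs (hαpos 0).le)
  | succ k ih =>
    have hαle : α (k + 1) ≤ α k := by
      rw [hα k, hα (k + 1)]
      exact add_le_add_right (div_le_div_of_nonneg_left hS (hβpos k) ih) M
    rw [hβ k, hβ (k + 1)]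
    exact add_le_add_right (div_le_div_of_nonneg_left hs (hαpos (k + 1)) hαle) L

omit hβ0 hβ in
theorem antitone_alpha (hS : 0 ≤ S) (hβpos : ∀ k, 0 < β k) (hβmono : Monotone β) :
    Antitone α := fun a b hab => by
  rw [hα a, hα b]
  exact add_le_add_right (div_le_div_of_nonneg_left hS (hβpos a) (hβmono hab)) M

theorem beta_le (hM : 0 < M) (hS : 0 ≤ S) (hs : 0 ≤ s) (hβpos : ∀ k, 0 < β k) (k : ℕ) :
    β k ≤ L + s / M := by
  cases k with
  | zero => rw [hβ0]; exact le_add_of_nonneg_right (div_nonneg hs hM.le)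
  | succ k =>
    rw [hβ k]
    exact add_le_add_right (div_le_div_of_nonneg_left hs hM (le_alpha hα hS hβpos k)) L

theorem bounds_and_convergence (hL : 0 < L) (hM : 0 < M) (hS : 0 ≤ S) (hs : 0 ≤ s) :
    Antitone α ∧ (∀ k, M ≤ α k) ∧ Monotone β ∧ (∀ k, β k ≤ L + s / M) ∧
      (∃ a : ℝ, Tendsto α atTop (nhds a)) ∧ (∃ b : ℝ, Tendsto β atTop (nhds b)) := by
  have hβpos := beta_pos hβ0 hα hβ hL hM hS hs
  have hαge := le_alpha hα hS hβpos
  have hβmono := monotone_beta hβ0 hα hβ hM hS hs hβpos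
  have hαanti := antitone_alpha hα hS hβpos hβmono
  have hβle := beta_le hβ0 hα hβ hM hS hs hβpos
  exact ⟨hαanti, hαge, hβmono, hβle,
    ⟨_, tendsto_atTop_ciInf hαanti ⟨M, Set.forall_mem_range.2 hαge⟩⟩,
    ⟨_, tendsto_atTop_ciSup hβmono ⟨L + s / M, Set.forall_mem_range.2 hβle⟩⟩⟩

end AlternatingRecurrence

namespace Matrix

variable {ι : Type*} [Fintype ι] [DecidableEq ι] {A : Matrix ι ι ℂ}

theorem PosDef.iInf_eigenvalues_pos_s8 [Nonempty ι] (hA : A.PosDef) :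
    0 < ⨅ j, hA.1.eigenvalues j := by
  obtain ⟨j, hj⟩ := exists_eq_ciInf_of_finite (f := hA.1.eigenvalues)
  exact hj ▸ hA.eigenvalues_pos j

theorem iInf_le_iSup_eigenvalues [Nonempty ι] (hA : A.IsHermitian) :
    ⨅ j, hA.eigenvalues j ≤ ⨆ j, hA.eigenvalues j :=
  ciInf_le_ciSup (Set.finite_range _).bddBelow (Set.finite_range _).bddAbove

theorem PosSemidef.iInf_eigenvalues_nonneg (hA : A.PosSemidef) :
    0 ≤ ⨅ j, hA.1.eigenvalues j :=
  Real.iInf_nonneg hA.eigenvalues_nonneg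

theorem PosSemidef.iSup_eigenvalues_nonneg (hA : A.PosSemidef) :
    0 ≤ ⨆ j, hA.1.eigenvalues j :=
  Real.iSup_nonneg hA.eigenvalues_nonneg

end Matrix

theorem stmt8 {n m : ℕ} (Q : Matrix (Fin n) (Fin n) ℂ) (hQ : Q.PosDef)
    (A : Fin m → Matrix (Fin n) (Fin n) ℂ)
    (α β : ℕ → ℝ)
    (hβ0 : β 0 = ⨅ j, hQ.1.eigenvalues j)
    (hα : ∀ k, α k = (⨆ j, hQ.1.eigenvalues j) +
        (∑ i, ⨆ j, (Matrix.posSemidef_conjTranspose_mul_self (A i)).1.eigenvalues j) / β k)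
    (hβ : ∀ k, β (k + 1) = (⨅ j, hQ.1.eigenvalues j) +
        (∑ i, ⨅ j, (Matrix.posSemidef_conjTranspose_mul_self (A i)).1.eigenvalues j) / α k) :
    Antitone α ∧ (∀ k, (⨆ j, hQ.1.eigenvalues j) ≤ α k) ∧
      Monotone β ∧
      (∀ k, β k ≤ (⨅ j, hQ.1.eigenvalues j) +
        (∑ i, ⨅ j, (Matrix.posSemidef_conjTranspose_mul_self (A i)).1.eigenvalues j) /
          (⨆ j, hQ.1.eigenvalues j)) ∧
      (∃ a : ℝ, Tendsto α atTop (nhds a)) ∧ (∃ b : ℝ, Tendsto β atTop (nhds b)) := by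
  rcases isEmpty_or_nonempty (Fin n) with _ | _
  · -- every eigenvalue extremum over the empty index set is the junk value `0`
    have hα0 : α = 0 := funext fun k => by simpa [Real.iSup_of_isEmpty] using hα k
    have hβzero : β = 0 := funext fun k => by
      cases k with
      | zero => simpa [Real.iInf_of_isEmpty] using hβ0
      | succ k => simpa [Real.iInf_of_isEmpty] using hβ k
    subst hα0 hβzero
    refine ⟨antitone_const, fun _ => ?_, monotone_const, fun _ => ?_, ⟨0, tendsto_const_nhds⟩,
      ⟨0, tendsto_const_nhds⟩⟩ <;> simp [Real.iSup_of_isEmpty, Real.iInf_of_isEmpty]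
  · have hL := hQ.iInf_eigenvalues_pos_s8
    exact AlternatingRecurrence.bounds_and_convergence hβ0 hα hβ hL
      (hL.trans_le (iInf_le_iSup_eigenvalues hQ.1))
      (sum_nonneg fun i _ => (posSemidef_conjTranspose_mul_self (A i)).iSup_eigenvalues_nonneg)
      (sum_nonneg fun i _ => (posSemidef_conjTranspose_mul_self (A i)).iInf_eigenvalues_nonneg)
end

section
/- Every Hermitian positive definite solution X of X - ∑_{i=1}^m A_i* X⁻¹ A_i = Q satisfies βI ≤ X ≤ αI, where α and β are the limits of the sequences β₀ = λ_min(Q), α_n = λ_max(Q) + (∑ λ_max(A_i* A_i))/β_n, β_{n+1} = λ_min(Q) + (∑ λ_min(A_i* A_i))/α_n; moreover λ_min(Q) ≤ β ≤ α. -/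
/-!
A solution satisfies `X = Q + ∑ Aᵢᴴ X⁻¹ Aᵢ`. A scalar lower bound `β • 1 ≤ X` inverts to
`X⁻¹ ≤ β⁻¹ • 1`, and conjugating by the `Aᵢ` turns this into the upper bound `X ≤ αₖ • 1`;
symmetrically an upper bound gives the next lower bound `βₖ₊₁ • 1 ≤ X`. Starting from
`β₀ • 1 = λ_min(Q) • 1 ≤ Q ≤ X`, induction gives `βₖ • 1 ≤ X ≤ αₖ • 1` for all `k`, and the bounds
pass to the limits through the eigenvalues of `X`.
-/

open scoped ComplexOrder MatrixOrder
open Matrix Finset Filter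

namespace Matrix

variable {ι κ 𝕜 : Type*} [Fintype ι] [DecidableEq ι] [Fintype κ] [RCLike 𝕜]

namespace IsHermitian

variable {M : Matrix ι ι 𝕜} {c : ℝ}

lemma smul_one_le_iff (hM : M.IsHermitian) : c • 1 ≤ M ↔ ∀ j, c ≤ hM.eigenvalues j := by
  rw [← Algebra.algebraMap_eq_smul_one, algebraMap_le_iff_le_spectrum hM.isSelfAdjoint,
    hM.spectrum_real_eq_range_eigenvalues, Set.forall_mem_range]

lemma le_smul_one_iff (hM : M.IsHermitian) : M ≤ c • 1 ↔ ∀ j, hM.eigenvalues j ≤ c := by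
  rw [← Algebra.algebraMap_eq_smul_one, le_algebraMap_iff_spectrum_le hM.isSelfAdjoint,
    hM.spectrum_real_eq_range_eigenvalues, Set.forall_mem_range]

lemma iInf_eigenvalues_smul_one_le_s9 (hM : M.IsHermitian) : (⨅ j, hM.eigenvalues j) • 1 ≤ M :=
  hM.smul_one_le_iff.2 fun j => ciInf_le (Finite.bddBelow_range _) j

lemma le_iSup_eigenvalues_smul_one_s9 (hM : M.IsHermitian) : M ≤ (⨆ j, hM.eigenvalues j) • 1 :=
  hM.le_smul_one_iff.2 fun j => le_ciSup (Finite.bddAbove_range _) j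

lemma smul_one_le_of_tendsto {α : Type*} {l : Filter α} [l.NeBot] {u : α → ℝ} {b : ℝ}
    (hM : M.IsHermitian) (hu : Tendsto u l (nhds b)) (h : ∀ k, u k • 1 ≤ M) : b • 1 ≤ M :=
  hM.smul_one_le_iff.2 fun j => le_of_tendsto' hu fun k => hM.smul_one_le_iff.1 (h k) j

lemma le_smul_one_of_tendsto {α : Type*} {l : Filter α} [l.NeBot] {u : α → ℝ} {a : ℝ}
    (hM : M.IsHermitian) (hu : Tendsto u l (nhds a)) (h : ∀ k, M ≤ u k • 1) : M ≤ a • 1 :=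
  hM.le_smul_one_iff.2 fun j => ge_of_tendsto' hu fun k => hM.le_smul_one_iff.1 (h k) j

end IsHermitian

namespace PosDef

variable {X : Matrix ι ι 𝕜} {c : ℝ}

lemma spectrum_inv (hX : X.PosDef) : spectrum ℝ X⁻¹ = (spectrum ℝ X)⁻¹ := by
  simpa using (spectrum.map_inv hX.isUnit.unit).symm

lemma inv_le_smul_one (hX : X.PosDef) (hc : 0 < c) (h : c • 1 ≤ X) : X⁻¹ ≤ c⁻¹ • 1 := by
  rw [← Algebra.algebraMap_eq_smul_one,
    algebraMap_le_iff_le_spectrum hX.isHermitian.isSelfAdjoint] at h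
  rw [← Algebra.algebraMap_eq_smul_one,
    le_algebraMap_iff_spectrum_le hX.inv.isHermitian.isSelfAdjoint, hX.spectrum_inv]
  exact fun x hx => le_inv_of_le_inv₀ hc (h _ hx)

lemma smul_one_le_inv (hX : X.PosDef) (h : X ≤ c • 1) : c⁻¹ • 1 ≤ X⁻¹ := by
  rw [← Algebra.algebraMap_eq_smul_one,
    le_algebraMap_iff_spectrum_le hX.isHermitian.isSelfAdjoint] at h
  rw [← Algebra.algebraMap_eq_smul_one,
    algebraMap_le_iff_le_spectrum hX.inv.isHermitian.isSelfAdjoint, hX.spectrum_inv]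
  exact fun x hx =>
    inv_le_of_inv_le₀ (inv_pos.mp (hX.isStrictlyPositive.spectrum_pos hx)) (h _ hx)

lemma iInf_eigenvalues_pos_s9 [Nonempty ι] (hX : X.PosDef) :
    0 < ⨅ j, hX.isHermitian.eigenvalues j := by
  obtain ⟨j, hj⟩ := exists_eq_ciInf_of_finite (f := hX.isHermitian.eigenvalues)
  exact hj ▸ hX.eigenvalues_pos j

end PosDef

namespace PosSemidef

variable {M : Matrix ι ι 𝕜}

lemma iInf_eigenvalues_nonneg_s9 (hM : M.PosSemidef) : 0 ≤ ⨅ j, hM.isHermitian.eigenvalues j :=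
  Real.iInf_nonneg hM.eigenvalues_nonneg

lemma iSup_eigenvalues_nonneg_s9 (hM : M.PosSemidef) : 0 ≤ ⨆ j, hM.isHermitian.eigenvalues j :=
  Real.iSup_nonneg hM.eigenvalues_nonneg

end PosSemidef

lemma sum_conjTranspose_mul_mul_le {Y : Matrix ι ι 𝕜} {A : κ → Matrix ι ι 𝕜} {c : ℝ}
    {s : κ → ℝ} (hc : 0 ≤ c) (hY : Y ≤ c • 1) (hA : ∀ i, (A i)ᴴ * A i ≤ s i • 1) :
    ∑ i, (A i)ᴴ * Y * A i ≤ (c * ∑ i, s i) • 1 := by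
  rw [mul_sum, sum_smul]
  gcongr with i
  calc (A i)ᴴ * Y * A i ≤ (A i)ᴴ * (c • 1) * A i := star_left_conjugate_le_conjugate hY (A i)
    _ = c • ((A i)ᴴ * A i) := by simp
    _ ≤ c • (s i • 1) := smul_le_smul_of_nonneg_left (hA i) hc
    _ = (c * s i) • 1 := smul_smul ..

lemma le_sum_conjTranspose_mul_mul {Y : Matrix ι ι 𝕜} {A : κ → Matrix ι ι 𝕜} {c : ℝ}
    {s : κ → ℝ} (hc : 0 ≤ c) (hY : c • 1 ≤ Y) (hA : ∀ i, s i • 1 ≤ (A i)ᴴ * A i) :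
    (c * ∑ i, s i) • 1 ≤ ∑ i, (A i)ᴴ * Y * A i := by
  rw [mul_sum, sum_smul]
  gcongr with i
  calc (c * s i) • (1 : Matrix ι ι 𝕜) = c • (s i • 1) := (smul_smul ..).symm
    _ ≤ c • ((A i)ᴴ * A i) := smul_le_smul_of_nonneg_left (hA i) hc
    _ = (A i)ᴴ * (c • 1) * A i := by simp
    _ ≤ (A i)ᴴ * Y * A i := star_left_conjugate_le_conjugate hY (A i)

section Equation

variable {Q X : Matrix ι ι 𝕜} {A : κ → Matrix ι ι 𝕜}

lemma le_of_sub_sum_conjTranspose_mul_inv_mul_eq (hX : X.PosDef)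
    (heq : X - ∑ i, (A i)ᴴ * X⁻¹ * A i = Q) : Q ≤ X := by
  rw [← heq, sub_le_self_iff]
  exact sum_nonneg fun i _ => star_left_conjugate_nonneg hX.inv.posSemidef.nonneg (A i)

lemma le_smul_one_of_smul_one_le (hQ : Q.IsHermitian) (hX : X.PosDef)
    (heq : X - ∑ i, (A i)ᴴ * X⁻¹ * A i = Q) {c : ℝ} (hc : 0 < c) (h : c • 1 ≤ X) :
    X ≤ ((⨆ j, hQ.eigenvalues j) +
      (∑ i, ⨆ j, (posSemidef_conjTranspose_mul_self (A i)).isHermitian.eigenvalues j) / c) • 1 := by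
  rw [add_smul, div_eq_inv_mul]
  exact (sub_eq_iff_eq_add.mp heq).le.trans <| add_le_add hQ.le_iSup_eigenvalues_smul_one_s9 <|
    sum_conjTranspose_mul_mul_le (inv_nonneg.2 hc.le) (hX.inv_le_smul_one hc h) fun i =>
      (posSemidef_conjTranspose_mul_self (A i)).isHermitian.le_iSup_eigenvalues_smul_one_s9

lemma smul_one_le_of_le_smul_one (hQ : Q.IsHermitian) (hX : X.PosDef)
    (heq : X - ∑ i, (A i)ᴴ * X⁻¹ * A i = Q) {c : ℝ} (hc : 0 ≤ c) (h : X ≤ c • 1) :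
    ((⨅ j, hQ.eigenvalues j) +
      (∑ i, ⨅ j, (posSemidef_conjTranspose_mul_self (A i)).isHermitian.eigenvalues j) / c) • 1
      ≤ X := by
  rw [add_smul, div_eq_inv_mul]
  refine le_trans ?_ (sub_eq_iff_eq_add.mp heq).ge
  exact add_le_add hQ.iInf_eigenvalues_smul_one_le_s9 <|
    le_sum_conjTranspose_mul_mul (inv_nonneg.2 hc) (hX.smul_one_le_inv h) fun i =>
      (posSemidef_conjTranspose_mul_self (A i)).isHermitian.iInf_eigenvalues_smul_one_le_s9

end Equation

end Matrix

theorem stmt9 {n m : ℕ} (Q : Matrix (Fin n) (Fin n) ℂ) (hQ : Q.PosDef)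
    (A : Fin m → Matrix (Fin n) (Fin n) ℂ)
    (α β : ℕ → ℝ)
    (hβ0 : β 0 = ⨅ j, hQ.1.eigenvalues j)
    (hα : ∀ k, α k = (⨆ j, hQ.1.eigenvalues j) +
        (∑ i, ⨆ j, (Matrix.posSemidef_conjTranspose_mul_self (A i)).1.eigenvalues j) / β k)
    (hβ : ∀ k, β (k + 1) = (⨅ j, hQ.1.eigenvalues j) +
        (∑ i, ⨅ j, (Matrix.posSemidef_conjTranspose_mul_self (A i)).1.eigenvalues j) / α k)
    (a b : ℝ)
    (ha : Tendsto α atTop (nhds a)) (hb : Tendsto β atTop (nhds b))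
    (X : Matrix (Fin n) (Fin n) ℂ) (hX : X.PosDef)
    (heq : X - ∑ i, (A i)ᴴ * X⁻¹ * A i = Q) :
    (X - (b : ℂ) • (1 : Matrix (Fin n) (Fin n) ℂ)).PosSemidef ∧
      ((a : ℂ) • (1 : Matrix (Fin n) (Fin n) ℂ) - X).PosSemidef ∧
      (⨅ j, hQ.1.eigenvalues j) ≤ b ∧ b ≤ a := by
  simp only [Complex.coe_smul, ← Matrix.le_iff]
  have hSmin : 0 ≤ ∑ i, ⨅ j, (posSemidef_conjTranspose_mul_self (A i)).1.eigenvalues j :=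
    sum_nonneg fun i _ => (posSemidef_conjTranspose_mul_self (A i)).iInf_eigenvalues_nonneg_s9
  have hSmax : 0 ≤ ∑ i, ⨆ j, (posSemidef_conjTranspose_mul_self (A i)).1.eigenvalues j :=
    sum_nonneg fun i _ => (posSemidef_conjTranspose_mul_self (A i)).iSup_eigenvalues_nonneg_s9
  have hα_nonneg : ∀ k, 0 ≤ β k → 0 ≤ α k := fun k hk =>
    hα k ▸ add_nonneg hQ.posSemidef.iSup_eigenvalues_nonneg_s9 (div_nonneg hSmax hk)
  rcases isEmpty_or_nonempty (Fin n) with hn | hn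
  · -- Over `Fin 0` every `⨅` and `⨆` of eigenvalues is the junk value `0`, so `α = β = 0`.
    have hα_zero : α = 0 := funext fun k => by simp [hα k]
    have hβ_zero : β = 0 := funext fun k => by cases k <;> simp [hβ0, hβ]
    obtain rfl : a = 0 := tendsto_nhds_unique ha (hα_zero ▸ tendsto_const_nhds)
    obtain rfl : b = 0 := tendsto_nhds_unique hb (hβ_zero ▸ tendsto_const_nhds)
    simp [Subsingleton.elim X 0]
  have lower : ∀ k, 0 < β k ∧ β k • 1 ≤ X := by
    intro k
    induction k with
    | zero =>
      rw [hβ0]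
      exact ⟨hQ.iInf_eigenvalues_pos_s9, hQ.1.iInf_eigenvalues_smul_one_le_s9.trans
        (le_of_sub_sum_conjTranspose_mul_inv_mul_eq hX heq)⟩
    | succ k ih =>
      have hαk := hα_nonneg k ih.1.le
      rw [hβ k]
      refine ⟨add_pos_of_pos_of_nonneg hQ.iInf_eigenvalues_pos_s9 (div_nonneg hSmin hαk),
        smul_one_le_of_le_smul_one hQ.1 hX heq hαk ?_⟩
      rw [hα k]
      exact le_smul_one_of_smul_one_le hQ.1 hX heq ih.1 ih.2
  have upper : ∀ k, X ≤ α k • 1 := fun k =>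
    hα k ▸ le_smul_one_of_smul_one_le hQ.1 hX heq (lower k).1 (lower k).2
  have hbX : b • 1 ≤ X := hX.1.smul_one_le_of_tendsto hb fun k => (lower k).2
  have hXa : X ≤ a • 1 := hX.1.le_smul_one_of_tendsto ha upper
  refine ⟨hbX, hXa, ge_of_tendsto' hb fun k => ?_, ?_⟩
  · cases k with
    | zero => exact hβ0.ge
    | succ k =>
      exact hβ k ▸ le_add_of_nonneg_right (div_nonneg hSmin (hα_nonneg k (lower k).1.le))
  · let j := Classical.arbitrary (Fin n)
    exact (hX.1.smul_one_le_iff.1 hbX j).trans (hX.1.le_smul_one_iff.1 hXa j)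
end

section
/- Let X be Hermitian positive definite and ΔX Hermitian with X + ΔX ≥ (1/ν)X > 0 for some ν > 0. Then for any n×n complex matrix A, ‖X^{-1/2} A* ((X+ΔX)⁻¹ - X⁻¹) A X^{-1/2}‖ ≤ (‖X^{-1/2} ΔX X^{-1/2}‖ + ν‖X^{-1/2} ΔX X^{-1/2}‖²) · ‖X^{-1/2} A X^{-1/2}‖², where ‖·‖ is the spectral norm. -/
open scoped ComplexOrder
open Matrix
open scoped Matrix.Norms.L2Operator

/-- The positive semidefinite square root of a positive semidefinite matrix
(the definition `Matrix.PosSemidef.sqrt` of the older Mathlib, since removed). -/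
noncomputable def Matrix.PosSemidef.sqrt {n : Type*} {𝕜 : Type*} [Fintype n] [DecidableEq n]
    [RCLike 𝕜] {A : Matrix n n 𝕜} (hA : A.PosSemidef) : Matrix n n 𝕜 :=
  hA.1.eigenvectorUnitary.1 * diagonal ((↑) ∘ (√·) ∘ hA.1.eigenvalues) *
  (star hA.1.eigenvectorUnitary : Matrix n n 𝕜)

/-! Put S = X^{1/2}, E = S⁻¹ ΔX S⁻¹ and B = S⁻¹ A S⁻¹. Since X + ΔX = S (1 + E) S, the matrix
on the left is Bᴴ ((1 + E)⁻¹ - 1) B, and the hypothesis says 1 + E ≥ ν⁻¹. Inversion is operator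
antitone, so ‖(1 + E)⁻¹‖ ≤ ν, and (1 + E)⁻¹ - 1 = (1 + E)⁻¹ E² - E gives the bound. -/
open scoped MatrixOrder

open Ring in
theorem CStarAlgebra.norm_ringInverse_le_of_algebraMap_le {A : Type*} [CStarAlgebra A]
    [PartialOrder A] [StarOrderedRing A] {a : A} {r : ℝ} (hr : 0 < r)
    (ha : algebraMap ℝ A r ≤ a) : ‖a⁻¹ʳ‖ ≤ r⁻¹ := by
  have hr' : IsStrictlyPositive (algebraMap ℝ A r) := isStrictlyPositive_algebraMap hr
  have hinv : (algebraMap ℝ A r)⁻¹ʳ = algebraMap ℝ A r⁻¹ := by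
    rw [← mul_one (algebraMap ℝ A r)⁻¹ʳ, inverse_mul_eq_iff_eq_mul _ _ _ hr'.isUnit, ← map_mul,
      mul_inv_cancel₀ hr.ne', map_one]
  refine (CStarAlgebra.norm_le_iff_le_algebraMap _ (inv_nonneg.2 hr.le)
    (hr'.of_le ha).ringInverse.nonneg).2 ?_
  exact hinv ▸ CStarAlgebra.ringInverse_le_ringInverse ha

theorem norm_sub_one_le_of_mul_one_add_eq_one {R : Type*} [NormedRing R] {q e : R}
    (h : q * (1 + e) = 1) : ‖q - 1‖ ≤ ‖e‖ + ‖q‖ * ‖e‖ ^ 2 := by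
  have hqe : q * e = 1 - q := by rw [mul_add, mul_one] at h; exact eq_sub_of_add_eq' h
  have hq : q - 1 = q * e * e - e := by rw [hqe, sub_mul, one_mul, hqe]; abel
  calc ‖q - 1‖ ≤ ‖q * e * e‖ + ‖e‖ := hq ▸ norm_sub_le _ _
    _ ≤ ‖q‖ * ‖e‖ * ‖e‖ + ‖e‖ := by grw [norm_mul_le, norm_mul_le]
    _ = ‖e‖ + ‖q‖ * ‖e‖ ^ 2 := by ring

theorem norm_star_mul_mul_le {R : Type*} [NonUnitalNormedRing R] [StarRing R] [NormedStarGroup R]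
    (b c : R) : ‖star b * c * b‖ ≤ ‖c‖ * ‖b‖ ^ 2 :=
  calc ‖star b * c * b‖ ≤ ‖star b‖ * ‖c‖ * ‖b‖ := by grw [norm_mul_le, norm_mul_le]
    _ = ‖c‖ * ‖b‖ ^ 2 := by rw [norm_star]; ring

namespace Matrix

section Sqrt

variable {m 𝕜 : Type*} [Fintype m] [DecidableEq m] [RCLike 𝕜] {A : Matrix m m 𝕜}

theorem PosSemidef.sqrt_eq_cfcSqrt (hA : A.PosSemidef) : hA.sqrt = CFC.sqrt A := by
  rw [CFC.sqrt_eq_real_sqrt A hA.nonneg, cfcₙ_eq_cfc, hA.1.cfc_eq]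
  rfl

theorem PosSemidef.sqrt_mul_self (hA : A.PosSemidef) : hA.sqrt * hA.sqrt = A := by
  rw [hA.sqrt_eq_cfcSqrt, CFC.sqrt_mul_sqrt_self A hA.nonneg]

theorem PosSemidef.conjTranspose_sqrt (hA : A.PosSemidef) : hA.sqrtᴴ = hA.sqrt := by
  rw [hA.sqrt_eq_cfcSqrt]
  exact (nonneg_iff_posSemidef.1 (CFC.sqrt_nonneg A)).1

theorem PosDef.isUnit_sqrt (hA : A.PosDef) : IsUnit hA.posSemidef.sqrt := by
  rw [hA.posSemidef.sqrt_eq_cfcSqrt, CFC.isUnit_sqrt_iff A hA.posSemidef.nonneg]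
  exact hA.isUnit

end Sqrt

section Congruence

variable {m R : Type*} [Fintype m] [DecidableEq m] [CommRing R]

theorem inv_mul_self_add (S D : Matrix m m R) (hS : IsUnit S) :
    (S * S + D)⁻¹ = S⁻¹ * (1 + S⁻¹ * D * S⁻¹)⁻¹ * S⁻¹ := by
  have hS' : IsUnit S.det := (isUnit_iff_isUnit_det S).1 hS
  have : S * S + D = S * (1 + S⁻¹ * D * S⁻¹) * S := by
    rw [mul_add, add_mul, mul_one, ← mul_assoc, ← mul_assoc, mul_nonsing_inv _ hS', one_mul,
      mul_assoc, nonsing_inv_mul _ hS', mul_one]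
  rw [this, mul_inv_rev, mul_inv_rev, ← mul_assoc]

theorem conj_inv_mul_self_add_sub_inv [StarRing R] {S : Matrix m m R} (hS : IsUnit S)
    (hSH : Sᴴ = S) (A D : Matrix m m R) :
    S⁻¹ * Aᴴ * ((S * S + D)⁻¹ - (S * S)⁻¹) * A * S⁻¹ =
      (S⁻¹ * A * S⁻¹)ᴴ * ((1 + S⁻¹ * D * S⁻¹)⁻¹ - 1) * (S⁻¹ * A * S⁻¹) := by
  rw [inv_mul_self_add S D hS, mul_inv_rev, conjTranspose_mul, conjTranspose_mul,
    conjTranspose_nonsing_inv, hSH]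
  simp only [mul_sub, sub_mul, mul_one, mul_assoc]

end Congruence

theorem norm_conj_inv_add_sub_inv_le {m : Type*} [Fintype m] [DecidableEq m]
    {S X D : Matrix m m ℂ} {ν : ℝ} (hν : 0 < ν) (hS : IsUnit S) (hSH : Sᴴ = S) (hSX : S * S = X)
    (h : (X + D - ((ν⁻¹ : ℝ) : ℂ) • X).PosSemidef) (A : Matrix m m ℂ) :
    ‖S⁻¹ * Aᴴ * ((X + D)⁻¹ - X⁻¹) * A * S⁻¹‖ ≤
      (‖S⁻¹ * D * S⁻¹‖ + ν * ‖S⁻¹ * D * S⁻¹‖ ^ 2) * ‖S⁻¹ * A * S⁻¹‖ ^ 2 := by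
  subst hSX
  set E := S⁻¹ * D * S⁻¹
  have hS' : IsUnit S.det := (isUnit_iff_isUnit_det S).1 hS
  have hE : algebraMap ℝ _ ν⁻¹ ≤ 1 + E := by
    have h' := h.conjTranspose_mul_mul_same S⁻¹
    rw [conjTranspose_nonsing_inv, hSH] at h'
    have hSXS : S⁻¹ * (S * S) * S⁻¹ = 1 := by
      rw [← mul_assoc, nonsing_inv_mul _ hS', one_mul, mul_nonsing_inv _ hS']
    rw [mul_sub, sub_mul, mul_add, add_mul, hSXS, Matrix.mul_smul, Matrix.smul_mul, hSXS] at h'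
    rwa [le_iff, Algebra.algebraMap_eq_smul_one, ← Complex.coe_smul]
  have hunit : IsUnit (1 + E) := CStarAlgebra.isUnit_of_le _ hE
  rw [conj_inv_mul_self_add_sub_inv hS hSH, ← star_eq_conjTranspose]
  calc _ ≤ ‖(1 + E)⁻¹ - 1‖ * ‖S⁻¹ * A * S⁻¹‖ ^ 2 := norm_star_mul_mul_le _ _
    _ ≤ (‖E‖ + ‖(1 + E)⁻¹‖ * ‖E‖ ^ 2) * ‖S⁻¹ * A * S⁻¹‖ ^ 2 := by
      grw [norm_sub_one_le_of_mul_one_add_eq_one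
        (nonsing_inv_mul _ ((isUnit_iff_isUnit_det _).1 hunit))]
    _ ≤ (‖E‖ + ν * ‖E‖ ^ 2) * ‖S⁻¹ * A * S⁻¹‖ ^ 2 := by
      grw [nonsing_inv_eq_ringInverse, CStarAlgebra.norm_ringInverse_le_of_algebraMap_le
        (inv_pos.2 hν) hE, inv_inv]

end Matrix

theorem stmt12_general {n : ℕ} (X ΔX : Matrix (Fin n) (Fin n) ℂ)
    (hX : X.PosDef)
    (ν : ℝ) (hν : 0 < ν)
    (h : (X + ΔX - ((ν⁻¹ : ℝ) : ℂ) • X).PosSemidef)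
    (A : Matrix (Fin n) (Fin n) ℂ) :
    ‖(hX.posSemidef.sqrt)⁻¹ * Aᴴ * ((X + ΔX)⁻¹ - X⁻¹) * A * (hX.posSemidef.sqrt)⁻¹‖ ≤
      (‖(hX.posSemidef.sqrt)⁻¹ * ΔX * (hX.posSemidef.sqrt)⁻¹‖ +
        ν * ‖(hX.posSemidef.sqrt)⁻¹ * ΔX * (hX.posSemidef.sqrt)⁻¹‖ ^ 2) *
      ‖(hX.posSemidef.sqrt)⁻¹ * A * (hX.posSemidef.sqrt)⁻¹‖ ^ 2 :=
  Matrix.norm_conj_inv_add_sub_inv_le hν hX.isUnit_sqrt hX.posSemidef.conjTranspose_sqrt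
    hX.posSemidef.sqrt_mul_self h A

theorem stmt12 {n : ℕ} (X ΔX : Matrix (Fin n) (Fin n) ℂ)
    (hX : X.PosDef) (hΔX : ΔX.IsHermitian)
    (ν : ℝ) (hν : 0 < ν)
    (h : (X + ΔX - ((ν⁻¹ : ℝ) : ℂ) • X).PosSemidef)
    (A : Matrix (Fin n) (Fin n) ℂ) :
    ‖(hX.posSemidef.sqrt)⁻¹ * Aᴴ * ((X + ΔX)⁻¹ - X⁻¹) * A * (hX.posSemidef.sqrt)⁻¹‖ ≤
      (‖(hX.posSemidef.sqrt)⁻¹ * ΔX * (hX.posSemidef.sqrt)⁻¹‖ +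
        ν * ‖(hX.posSemidef.sqrt)⁻¹ * ΔX * (hX.posSemidef.sqrt)⁻¹‖ ^ 2) *
      ‖(hX.posSemidef.sqrt)⁻¹ * A * (hX.posSemidef.sqrt)⁻¹‖ ^ 2 :=
  stmt12_general X ΔX hX ν hν h A
end

section
/- Let X be the unique Hermitian positive definite solution of X - ∑_{i=1}^m A_i* X⁻¹ A_i = Q and suppose ‖X⁻¹‖ ≤ 1/β with ∑_{i=1}^m ‖A_i‖² < β². If ΔX is a Hermitian matrix satisfying ΔX + ∑_{i=1}^m (A_i* X⁻¹) ΔX (X⁻¹ A_i) = ∑_{i=1}^m [dA_i* (X⁻¹ A_i) + (A_i* X⁻¹) dA_i] for given matrices dA_i, then ‖ΔX‖ ≤ 2β ∑_{i=1}^m ‖A_i‖ ‖dA_i‖ / (β² - ∑_{i=1}^m ‖A_i‖²). -/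
/-! Write `Y = X⁻¹`, so `‖Y‖ ≤ 1/β`. Moving the sum to the right, the perturbation equation
exhibits `ΔX` as `∑ (dA_i* Y A_i + A_i* Y dA_i) - ∑ A_i* Y ΔX Y A_i`, whence
`‖ΔX‖ ≤ 2 (∑ ‖A_i‖ ‖dA_i‖) / β + (∑ ‖A_i‖² / β²) ‖ΔX‖`. The contraction factor
`∑ ‖A_i‖² / β²` is `< 1`, and solving for `‖ΔX‖` gives the bound. -/

open scoped ComplexOrder
open Matrix Finset
open scoped Matrix.Norms.L2Operator

lemma le_div_one_sub_of_le_add_mul {x b q : ℝ} (hq : q < 1) (h : x ≤ b + q * x) :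
    x ≤ b / (1 - q) := by
  rw [le_div_iff₀ (sub_pos.mpr hq)]
  linarith

section NormedStarRing

variable {R ι : Type*} [NormedRing R] [StarRing R] [NormedStarGroup R] [Fintype ι]

lemma norm_star_mul_mul_add_star_mul_mul_le (a d y : R) :
    ‖star d * (y * a) + star a * y * d‖ ≤ 2 * ‖y‖ * (‖a‖ * ‖d‖) :=
  calc ‖star d * (y * a) + star a * y * d‖
      ≤ ‖d‖ * (‖y‖ * ‖a‖) + ‖a‖ * ‖y‖ * ‖d‖ := by
        refine (norm_add_le _ _).trans (add_le_add ?_ ?_)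
        · rw [← norm_star d]
          exact norm_mul_le_of_le le_rfl (norm_mul_le _ _)
        · rw [← norm_star a]
          exact norm_mul₃_le
    _ = 2 * ‖y‖ * (‖a‖ * ‖d‖) := by ring

lemma norm_star_mul_mul_mul_mul_le (a y z : R) :
    ‖star a * y * z * (y * a)‖ ≤ ‖y‖ ^ 2 * ‖a‖ ^ 2 * ‖z‖ :=
  calc ‖star a * y * z * (y * a)‖ ≤ ‖a‖ * ‖y‖ * ‖z‖ * (‖y‖ * ‖a‖) := by
        refine norm_mul_le_of_le ?_ (norm_mul_le _ _)
        rw [← norm_star a]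
        exact norm_mul₃_le
    _ = ‖y‖ ^ 2 * ‖a‖ ^ 2 * ‖z‖ := by ring

lemma norm_sum_star_mul_mul_add_star_mul_mul_le (a d : ι → R) (y : R) :
    ‖∑ i, (star (d i) * (y * a i) + star (a i) * y * d i)‖ ≤
      2 * ‖y‖ * ∑ i, ‖a i‖ * ‖d i‖ := by
  rw [mul_sum]
  exact (norm_sum_le _ _).trans
    (sum_le_sum fun i _ => norm_star_mul_mul_add_star_mul_mul_le (a i) (d i) y)

lemma norm_sum_star_mul_mul_mul_mul_le (a : ι → R) (y z : R) :
    ‖∑ i, star (a i) * y * z * (y * a i)‖ ≤ ‖y‖ ^ 2 * (∑ i, ‖a i‖ ^ 2) * ‖z‖ := by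
  rw [mul_sum, sum_mul]
  exact (norm_sum_le _ _).trans
    (sum_le_sum fun i _ => norm_star_mul_mul_mul_mul_le (a i) y z)

end NormedStarRing

theorem stmt15_general {n m : ℕ}
    (A dA : Fin m → Matrix (Fin n) (Fin n) ℂ)
    (X : Matrix (Fin n) (Fin n) ℂ)
    (β : ℝ) (hβ : 0 < β)
    (hXinv : ‖X⁻¹‖ ≤ 1 / β)
    (hA : ∑ i, ‖A i‖ ^ 2 < β ^ 2)
    (ΔX : Matrix (Fin n) (Fin n) ℂ)
    (hΔeq : ΔX + ∑ i, ((A i)ᴴ * X⁻¹) * ΔX * (X⁻¹ * A i) =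
      ∑ i, ((dA i)ᴴ * (X⁻¹ * A i) + ((A i)ᴴ * X⁻¹) * dA i)) :
    ‖ΔX‖ ≤ 2 * β * (∑ i, ‖A i‖ * ‖dA i‖) / (β ^ 2 - ∑ i, ‖A i‖ ^ 2) := by
  set T := ∑ i, ‖A i‖ * ‖dA i‖
  set S := ∑ i, ‖A i‖ ^ 2
  have hΔ : ΔX = ∑ i, ((dA i)ᴴ * (X⁻¹ * A i) + ((A i)ᴴ * X⁻¹) * dA i)
      - ∑ i, ((A i)ᴴ * X⁻¹) * ΔX * (X⁻¹ * A i) :=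
    eq_sub_of_add_eq hΔeq
  have hrhs := norm_sum_star_mul_mul_add_star_mul_mul_le A dA X⁻¹
  have hcontr := norm_sum_star_mul_mul_mul_mul_le A X⁻¹ ΔX
  have key : ‖ΔX‖ ≤ 2 * T / β + S / β ^ 2 * ‖ΔX‖ :=
    calc ‖ΔX‖ ≤ 2 * ‖X⁻¹‖ * T + ‖X⁻¹‖ ^ 2 * S * ‖ΔX‖ := by
          conv_lhs => rw [hΔ]
          exact (norm_sub_le _ _).trans (add_le_add hrhs hcontr)
      _ ≤ 2 * (1 / β) * T + (1 / β) ^ 2 * S * ‖ΔX‖ := by gcongr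
      _ = 2 * T / β + S / β ^ 2 * ‖ΔX‖ := by ring
  have hq : S / β ^ 2 < 1 := (div_lt_one (by positivity)).mpr hA
  calc ‖ΔX‖ ≤ 2 * T / β / (1 - S / β ^ 2) := le_div_one_sub_of_le_add_mul hq key
    _ = 2 * β * T / (β ^ 2 - S) := by field_simp

theorem stmt15 {n m : ℕ} (Q : Matrix (Fin n) (Fin n) ℂ) (hQ : Q.PosDef)
    (A dA : Fin m → Matrix (Fin n) (Fin n) ℂ)
    (X : Matrix (Fin n) (Fin n) ℂ) (hX : X.PosDef)
    (heq : X - ∑ i, (A i)ᴴ * X⁻¹ * A i = Q)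
    (β : ℝ) (hβ : 0 < β)
    (hXinv : ‖X⁻¹‖ ≤ 1 / β)
    (hA : ∑ i, ‖A i‖ ^ 2 < β ^ 2)
    (ΔX : Matrix (Fin n) (Fin n) ℂ) (hΔX : ΔX.IsHermitian)
    (hΔeq : ΔX + ∑ i, ((A i)ᴴ * X⁻¹) * ΔX * (X⁻¹ * A i) =
      ∑ i, ((dA i)ᴴ * (X⁻¹ * A i) + ((A i)ᴴ * X⁻¹) * dA i)) :
    ‖ΔX‖ ≤ 2 * β * (∑ i, ‖A i‖ * ‖dA i‖) / (β ^ 2 - ∑ i, ‖A i‖ ^ 2) :=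
  stmt15_general A dA X β hβ hXinv hA ΔX hΔeq
end
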